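/- arXiv:1002.1599 — 14 statements merged into one kernel-verified Lean document; each statement's English description precedes it below -/
import Mathlib

section
/- Every compact Hausdorff left topological left semiring has a common idempotent, i.e., there exists an element a with a + a = a and a · a = a. -/
/-!
By Zorn's lemma and compactness there is a minimal nonempty closed subset `Y` stable under both
operations. Ellis' lemma gives an additive idempotent `a ∈ Y`. Left distributivity and
associativity make `a · Y` again such a set, so `a · Y = Y` by minimality and `a = a · b` for some
`b ∈ Y`. Then `{y ∈ Y | a · y = a}` is nonempty, closed and stable (here `a + a = a` is used),
so by minimality it is all of `Y`; in particular `a · a = a`.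
-/

open Set

section

variable {X : Type*} [TopologicalSpace X]

theorem exists_idempotent_of_isCompact [T2Space X] {q : X → X → X}
    (hq_assoc : ∀ x y z : X, q (q x y) z = q x (q y z)) (hq_cont : ∀ a : X, Continuous (q a))
    {s : Set X} (hs_ne : s.Nonempty) (hs : IsCompact s) (hs_mem : ∀ x ∈ s, ∀ y ∈ s, q x y ∈ s) :
    ∃ a ∈ s, q a a = a := by
  -- In the opposite semigroup the right multiplications are the continuous maps `q a`.
  let : Semigroup X :=
    { mul := fun x y => q y x, mul_assoc := fun x y z => (hq_assoc z y x).symm }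
  exact exists_idempotent_in_compact_subsemigroup hq_cont s hs_ne hs
    fun x hx y hy => hs_mem y hy x hx

structure IsClosedSubsemiring (p m : X → X → X) (Y : Set X) : Prop where
  nonempty : Y.Nonempty
  isClosed : IsClosed Y
  add_mem : ∀ x ∈ Y, ∀ y ∈ Y, p x y ∈ Y
  mul_mem : ∀ x ∈ Y, ∀ y ∈ Y, m x y ∈ Y

namespace IsClosedSubsemiring

variable {p m : X → X → X}

theorem univ [Nonempty X] : IsClosedSubsemiring p m (Set.univ : Set X) :=
  ⟨univ_nonempty, isClosed_univ, fun _ _ _ _ => trivial, fun _ _ _ _ => trivial⟩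

theorem sInter_of_isChain [CompactSpace X] {c : Set (Set X)}
    (hc : ∀ Y ∈ c, IsClosedSubsemiring p m Y) (hchain : IsChain (· ⊆ ·) c) (hc_ne : c.Nonempty) :
    IsClosedSubsemiring p m (⋂₀ c) where
  nonempty := by
    have : Nonempty c := hc_ne.coe_sort
    exact IsCompact.nonempty_sInter_of_directed_nonempty_isCompact_isClosed
      (IsChain.directedOn hchain.symm) (fun Y hY => (hc Y hY).nonempty)
      (fun Y hY => (hc Y hY).isClosed.isCompact) (fun Y hY => (hc Y hY).isClosed)
  isClosed := isClosed_sInter fun Y hY => (hc Y hY).isClosed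
  add_mem x hx y hy := mem_sInter.2 fun Y hY =>
    (hc Y hY).add_mem x (mem_sInter.1 hx Y hY) y (mem_sInter.1 hy Y hY)
  mul_mem x hx y hy := mem_sInter.2 fun Y hY =>
    (hc Y hY).mul_mem x (mem_sInter.1 hx Y hY) y (mem_sInter.1 hy Y hY)

theorem exists_minimal [CompactSpace X] [Nonempty X] :
    ∃ Y, Minimal (IsClosedSubsemiring p m) Y := by
  obtain ⟨Y, -, hY⟩ := zorn_superset_nonempty {Y | IsClosedSubsemiring p m Y}
    (fun c hc hchain hc_ne =>
      ⟨⋂₀ c, sInter_of_isChain hc hchain hc_ne, fun _ hY => sInter_subset_of_mem hY⟩)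
    Set.univ univ
  exact ⟨Y, hY⟩

theorem image_mul_left [CompactSpace X] [T2Space X]
    (hm_assoc : ∀ x y z : X, m (m x y) z = m x (m y z))
    (hld : ∀ x y z : X, m x (p y z) = p (m x y) (m x z)) (hmc : ∀ a : X, Continuous (m a))
    {Y : Set X} (hY : IsClosedSubsemiring p m Y) {a : X} (ha : a ∈ Y) :
    IsClosedSubsemiring p m (m a '' Y) where
  nonempty := hY.nonempty.image _
  isClosed := (hY.isClosed.isCompact.image (hmc a)).isClosed
  add_mem := by
    rintro _ ⟨y, hy, rfl⟩ _ ⟨z, hz, rfl⟩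
    exact ⟨p y z, hY.add_mem y hy z hz, hld a y z⟩
  mul_mem := by
    rintro _ ⟨y, hy, rfl⟩ _ ⟨z, hz, rfl⟩
    exact ⟨m y (m a z), hY.mul_mem y hy _ (hY.mul_mem a ha z hz), (hm_assoc a y (m a z)).symm⟩

theorem inter_preimage_mul_left [T1Space X]
    (hm_assoc : ∀ x y z : X, m (m x y) z = m x (m y z))
    (hld : ∀ x y z : X, m x (p y z) = p (m x y) (m x z))
    {Y : Set X} (hY : IsClosedSubsemiring p m Y) {a b : X} (hmc : Continuous (m a))
    (haa : p a a = a) (hb : b ∈ Y) (hab : m a b = a) :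
    IsClosedSubsemiring p m (Y ∩ m a ⁻¹' {a}) where
  nonempty := ⟨b, hb, hab⟩
  isClosed := hY.isClosed.inter (isClosed_singleton.preimage hmc)
  add_mem := by
    rintro x ⟨hxY, hx : m a x = a⟩ y ⟨hyY, hy : m a y = a⟩
    refine ⟨hY.add_mem x hxY y hyY, ?_⟩
    change m a (p x y) = a
    rw [hld, hx, hy, haa]
  mul_mem := by
    rintro x ⟨hxY, hx : m a x = a⟩ y ⟨hyY, hy : m a y = a⟩
    refine ⟨hY.mul_mem x hxY y hyY, ?_⟩
    change m a (m x y) = a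
    rw [← hm_assoc, hx, hy]

end IsClosedSubsemiring

end

/-- Every compact Hausdorff left topological left semiring has a common idempotent. -/
theorem stmt_0 {X : Type*} [TopologicalSpace X] [CompactSpace X] [T2Space X] [Nonempty X]
    (p m : X → X → X)
    (hp_assoc : ∀ x y z : X, p (p x y) z = p x (p y z))
    (hm_assoc : ∀ x y z : X, m (m x y) z = m x (m y z))
    (hld : ∀ x y z : X, m x (p y z) = p (m x y) (m x z))
    (hpc : ∀ a : X, Continuous fun x => p a x)
    (hmc : ∀ a : X, Continuous fun x => m a x) :
    ∃ a : X, p a a = a ∧ m a a = a := by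
  obtain ⟨Y, hY_min⟩ := IsClosedSubsemiring.exists_minimal (p := p) (m := m)
  have hY := hY_min.prop
  obtain ⟨a, haY, haa⟩ :=
    exists_idempotent_of_isCompact hp_assoc hpc hY.nonempty hY.isClosed.isCompact hY.add_mem
  have h_image : m a '' Y = Y :=
    hY_min.eq_of_subset (hY.image_mul_left hm_assoc hld hmc haY)
      (image_subset_iff.2 fun y hy => hY.mul_mem a haY y hy)
  obtain ⟨b, hbY, hab⟩ : a ∈ m a '' Y := h_image.ge haY
  have h_fixed : Y ∩ m a ⁻¹' {a} = Y :=
    hY_min.eq_of_subset (hY.inter_preimage_mul_left hm_assoc hld (hmc a) haa hbY hab)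
      inter_subset_left
  exact ⟨a, haa, (h_fixed.ge haY).2⟩
end

section
/- Every minimal compact Hausdorff left topological left semiring consists of a unique element: if X is a nonempty compact Hausdorff left topological left semiring such that every nonempty compact subset of X closed under both + and · equals X, then X is a singleton. -/
/-!
Ellis' lemma, applied to the reversed addition, gives an additive idempotent `e`. The left ideal
`e·X` is a compact subsemiring, so it is all of `X` and contains `e`; hence the closed set
`{x | e·x = e}`, which is closed under `+` because `e + e = e`, is a nonempty compact subsemiring
too, so `e·e = e`. Then `{e}` is a subsemiring, and minimality gives `X = {e}`.
-/

open Set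

theorem exists_idempotent_of_continuous_left {X : Type*} [TopologicalSpace X] [CompactSpace X]
    [T2Space X] [Nonempty X] (p : X → X → X) (hp_assoc : ∀ x y z : X, p (p x y) z = p x (p y z))
    (hpc : ∀ a : X, Continuous fun x => p a x) : ∃ e : X, p e e = e :=
  letI : Semigroup X := { mul := fun a b => p b a, mul_assoc := fun a b c => (hp_assoc c b a).symm }
  exists_idempotent_of_compact_t2_of_continuous_mul_left hpc

section LeftSemiring

variable {X : Type*} (p m : X → X → X)

theorem add_mem_range_mul_left (hld : ∀ x y z : X, m x (p y z) = p (m x y) (m x z)) (a : X) :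
    ∀ x ∈ range (m a), ∀ y ∈ range (m a), p x y ∈ range (m a) := by
  rintro _ ⟨x, rfl⟩ _ ⟨y, rfl⟩
  exact ⟨p x y, hld a x y⟩

theorem mul_mem_range_mul_left (hm_assoc : ∀ x y z : X, m (m x y) z = m x (m y z)) (a : X) :
    ∀ x ∈ range (m a), ∀ y ∈ range (m a), m x y ∈ range (m a) := by
  rintro _ ⟨x, rfl⟩ _ ⟨y, rfl⟩
  exact ⟨m x (m a y), (hm_assoc a x (m a y)).symm⟩

theorem add_mem_setOf_mul_left_eq (hld : ∀ x y z : X, m x (p y z) = p (m x y) (m x z)) {e : X}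
    (he : p e e = e) : ∀ x ∈ {x | m e x = e}, ∀ y ∈ {x | m e x = e}, p x y ∈ {x | m e x = e} := by
  intro x hx y hy
  show m e (p x y) = e
  rw [hld, hx, hy, he]

theorem mul_mem_setOf_mul_left_eq (hm_assoc : ∀ x y z : X, m (m x y) z = m x (m y z)) (e : X) :
    ∀ x ∈ {x | m e x = e}, ∀ y ∈ {x | m e x = e}, m x y ∈ {x | m e x = e} := by
  intro x hx y hy
  show m e (m x y) = e
  rw [← hm_assoc, hx, hy]

end LeftSemiring

/-- Every minimal compact Hausdorff left topological left semiring is a singleton. -/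
theorem stmt_1 {X : Type*} [TopologicalSpace X] [CompactSpace X] [T2Space X] [Nonempty X]
    (p m : X → X → X)
    (hp_assoc : ∀ x y z : X, p (p x y) z = p x (p y z))
    (hm_assoc : ∀ x y z : X, m (m x y) z = m x (m y z))
    (hld : ∀ x y z : X, m x (p y z) = p (m x y) (m x z))
    (hpc : ∀ a : X, Continuous fun x => p a x)
    (hmc : ∀ a : X, Continuous fun x => m a x)
    (hmin : ∀ A : Set X, A.Nonempty → IsCompact A →
      (∀ x ∈ A, ∀ y ∈ A, p x y ∈ A) → (∀ x ∈ A, ∀ y ∈ A, m x y ∈ A) → A = Set.univ) :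
    ∃ a : X, ∀ x : X, x = a := by
  obtain ⟨e, he⟩ := exists_idempotent_of_continuous_left p hp_assoc hpc
  have hrange : range (m e) = univ := hmin _ (range_nonempty _) (isCompact_range (hmc e))
    (add_mem_range_mul_left p m hld e) (mul_mem_range_mul_left m hm_assoc e)
  have hfix : {x | m e x = e} = univ := hmin _ (eq_univ_iff_forall.mp hrange e)
    (isClosed_singleton.preimage (hmc e)).isCompact
    (add_mem_setOf_mul_left_eq p m hld he) (mul_mem_setOf_mul_left_eq m hm_assoc e)
  have hee : m e e = e := eq_univ_iff_forall.mp hfix e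
  have hsingleton : {e} = univ := hmin {e} (singleton_nonempty e) isCompact_singleton
    (by simp [he]) (by simp [hee])
  exact ⟨e, eq_univ_iff_forall.mp hsingleton⟩
end

section
/- In every minimal compact Hausdorff left topological left semiring, any additive idempotent is also a multiplicative idempotent: if X is a nonempty compact Hausdorff left topological left semiring in which every nonempty compact subset closed under both operations equals X, and a ∈ X satisfies a + a = a, then a · a = a. -/
/-!
Left multiplication by `a` has compact image, and by left distributivity and associativity this
image is closed under both operations; by minimality it is all of `X`, so `a = a · x` for some `x`.
The fibre `{y | a · y = a}` is therefore nonempty; it is closed (hence compact) since `X` is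
Hausdorff, closed under `+` because `a + a = a`, and closed under `·` by associativity.
Minimality again makes it all of `X`, in particular `a · a = a`.
-/

section LeftSemiring

variable {X : Type*} (p m : X → X → X)

lemma add_mem_range_mul (hld : ∀ x y z : X, m x (p y z) = p (m x y) (m x z)) (a : X)
    {x y : X} (hx : x ∈ Set.range (m a)) (hy : y ∈ Set.range (m a)) :
    p x y ∈ Set.range (m a) := by
  obtain ⟨u, rfl⟩ := hx
  obtain ⟨v, rfl⟩ := hy
  exact ⟨p u v, hld a u v⟩

lemma mul_mem_range_mul (hm_assoc : ∀ x y z : X, m (m x y) z = m x (m y z)) (a : X)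
    {x y : X} (hx : x ∈ Set.range (m a)) : m x y ∈ Set.range (m a) := by
  obtain ⟨u, rfl⟩ := hx
  exact ⟨m u y, (hm_assoc a u y).symm⟩

lemma mul_add_eq_of_mul_eq (hld : ∀ x y z : X, m x (p y z) = p (m x y) (m x z)) {a : X}
    (ha : p a a = a) {y z : X} (hy : m a y = a) (hz : m a z = a) : m a (p y z) = a := by
  rw [hld, hy, hz, ha]

lemma mul_mul_eq_of_mul_eq (hm_assoc : ∀ x y z : X, m (m x y) z = m x (m y z)) {a y : X}
    (hy : m a y = a) (z : X) : m a (m y z) = m a z := by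
  rw [← hm_assoc, hy]

end LeftSemiring

theorem stmt_2_general {X : Type*} [TopologicalSpace X] [CompactSpace X] [T2Space X]
    (p m : X → X → X)
    (hm_assoc : ∀ x y z : X, m (m x y) z = m x (m y z))
    (hld : ∀ x y z : X, m x (p y z) = p (m x y) (m x z))
    (hmc : ∀ a : X, Continuous fun x => m a x)
    (hmin : ∀ A : Set X, A.Nonempty → IsCompact A →
      (∀ x ∈ A, ∀ y ∈ A, p x y ∈ A) → (∀ x ∈ A, ∀ y ∈ A, m x y ∈ A) → A = Set.univ)
    (a : X) (ha : p a a = a) :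
    m a a = a := by
  have hrange : Set.range (m a) = Set.univ :=
    hmin _ ⟨m a a, a, rfl⟩ (isCompact_range (hmc a))
      (fun _ hx _ hy => add_mem_range_mul p m hld a hx hy)
      (fun _ hx _ _ => mul_mem_range_mul m hm_assoc a hx)
  obtain ⟨x, hx⟩ : a ∈ Set.range (m a) := Set.eq_univ_iff_forall.mp hrange a
  have hfibre : m a ⁻¹' {a} = Set.univ :=
    hmin _ ⟨x, hx⟩ (isClosed_singleton.preimage (hmc a)).isCompact
      (fun _ hy _ hz => mul_add_eq_of_mul_eq p m hld ha hy hz)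
      (fun _ hy _ hz => (mul_mul_eq_of_mul_eq m hm_assoc hy _).trans hz)
  exact Set.eq_univ_iff_forall.mp hfibre a

/-- In a minimal compact Hausdorff left topological left semiring, any additive idempotent
is also a multiplicative idempotent. -/
theorem stmt_2 {X : Type*} [TopologicalSpace X] [CompactSpace X] [T2Space X] [Nonempty X]
    (p m : X → X → X)
    (hp_assoc : ∀ x y z : X, p (p x y) z = p x (p y z))
    (hm_assoc : ∀ x y z : X, m (m x y) z = m x (m y z))
    (hld : ∀ x y z : X, m x (p y z) = p (m x y) (m x z))
    (hpc : ∀ a : X, Continuous fun x => p a x)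
    (hmc : ∀ a : X, Continuous fun x => m a x)
    (hmin : ∀ A : Set X, A.Nonempty → IsCompact A →
      (∀ x ∈ A, ∀ y ∈ A, p x y ∈ A) → (∀ x ∈ A, ∀ y ∈ A, m x y ∈ A) → A = Set.univ)
    (a : X) (ha : p a a = a) :
    m a a = a :=
  stmt_2_general p m hm_assoc hld hmc hmin a ha
end

section
/- Any minimal finite left semiring consists of a unique element: if X is a nonempty finite left semiring such that every nonempty subset of X closed under both + and · equals X, then X is a singleton. -/
/-!
The additive idempotents of a left semiring are closed under multiplication, by left
distributivity. A finite semigroup contains an idempotent, so there is an additive idempotent,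
and then, inside the multiplicative semigroup of additive idempotents, an element `v` with
`v + v = v = v · v`. The singleton `{v}` is then a subsemiring, hence all of `X`.
-/

lemma exists_idempotent_of_finite {α : Type*} [Finite α] (op : α → α → α)
    (hassoc : ∀ x y z, op (op x y) z = op x (op y z)) (s : Set α) (hs : s.Nonempty)
    (hclosed : ∀ x ∈ s, ∀ y ∈ s, op x y ∈ s) :
    ∃ e ∈ s, op e e = e := by
  -- With the discrete topology, a finite semigroup is a compact Hausdorff one.
  let : Semigroup α := { mul := op, mul_assoc := hassoc }
  let : TopologicalSpace α := ⊥
  have : DiscreteTopology α := ⟨rfl⟩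
  exact exists_idempotent_in_compact_subsemigroup (fun _ => continuous_of_discreteTopology)
    s hs s.toFinite.isCompact hclosed

lemma add_idem_mul_of_add_idem {X : Type*} {p m : X → X → X}
    (hld : ∀ x y z : X, m x (p y z) = p (m x y) (m x z)) (x : X) {y : X} (hy : p y y = y) :
    p (m x y) (m x y) = m x y := by
  rw [← hld, hy]

/-- Any minimal finite left semiring consists of a unique element. -/
theorem stmt_4 {X : Type*} [Finite X] [Nonempty X]
    (p m : X → X → X)
    (hp_assoc : ∀ x y z : X, p (p x y) z = p x (p y z))
    (hm_assoc : ∀ x y z : X, m (m x y) z = m x (m y z))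
    (hld : ∀ x y z : X, m x (p y z) = p (m x y) (m x z))
    (hmin : ∀ A : Set X, A.Nonempty →
      (∀ x ∈ A, ∀ y ∈ A, p x y ∈ A) → (∀ x ∈ A, ∀ y ∈ A, m x y ∈ A) → A = Set.univ) :
    ∃ a : X, ∀ x : X, x = a := by
  obtain ⟨u, -, hu⟩ := exists_idempotent_of_finite p hp_assoc Set.univ Set.univ_nonempty
    (fun _ _ _ _ => trivial)
  obtain ⟨v, hpv, hmv⟩ := exists_idempotent_of_finite m hm_assoc {x | p x x = x} ⟨u, hu⟩
    (fun x _ _ hy => add_idem_mul_of_add_idem hld x hy)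
  have hv : ({v} : Set X) = Set.univ :=
    hmin {v} (Set.singleton_nonempty v) (by simp [hpv.out]) (by simp [hmv])
  exact ⟨v, fun x => Set.eq_of_mem_singleton (hv ▸ Set.mem_univ x)⟩
end

section
/- Any minimal semiring consists of a unique element: if X is a nonempty set with two associative binary operations + and · satisfying both distributive laws x·(y+z) = x·y + x·z and (x+y)·z = x·z + y·z, and every nonempty subset of X closed under both + and · equals X, then X is a singleton. -/
/-!
Minimality forces every left and right multiplication `y ↦ b·y`, `y ↦ y·b` to be surjective,
since its range is a subsemiring; a semigroup with this property has a two-sided identity `e`.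
The range of `y ↦ y + e` is again a subsemiring, so `c + e = e` for some `c`; then
`{x | x + e = e}` is a nonempty subsemiring, whence `e + e = e`. Now `{e}` is a subsemiring.
-/

open Function

section

variable {X : Type*}

def IsMinimal (p m : X → X → X) : Prop :=
  ∀ A : Set X, A.Nonempty →
    (∀ x ∈ A, ∀ y ∈ A, p x y ∈ A) → (∀ x ∈ A, ∀ y ∈ A, m x y ∈ A) → A = Set.univ

theorem exists_mul_identity_of_surjective {m : X → X → X}
    (hm_assoc : ∀ x y z : X, m (m x y) z = m x (m y z)) {a : X}
    (hl : Surjective (m a)) (hr : Surjective (fun y => m y a)) :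
    ∃ e, ∀ x, m e x = x ∧ m x e = x := by
  obtain ⟨e, he⟩ := hl a
  obtain ⟨e', he' : m e' a = a⟩ := hr a
  have right_id : ∀ x, m x e = x := fun x => by
    obtain ⟨y, rfl⟩ := hr x
    rw [hm_assoc, he]
  have left_id : ∀ x, m e' x = x := fun x => by
    obtain ⟨y, rfl⟩ := hl x
    rw [← hm_assoc, he']
  have hee : e' = e := (right_id e').symm.trans (left_id e)
  exact ⟨e, fun x => ⟨hee ▸ left_id x, right_id x⟩⟩

namespace IsMinimal

variable {p m : X → X → X}

theorem forall_mem (hmin : IsMinimal p m) {A : Set X} (hA : A.Nonempty)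
    (hp : ∀ x ∈ A, ∀ y ∈ A, p x y ∈ A) (hm : ∀ x ∈ A, ∀ y ∈ A, m x y ∈ A) (x : X) : x ∈ A :=
  hmin A hA hp hm ▸ Set.mem_univ x

theorem surjective_mul_left (hmin : IsMinimal p m)
    (hm_assoc : ∀ x y z : X, m (m x y) z = m x (m y z))
    (hld : ∀ x y z : X, m x (p y z) = p (m x y) (m x z)) (b : X) : Surjective (m b) :=
  hmin.forall_mem ⟨_, b, rfl⟩
    (by rintro _ ⟨y, rfl⟩ _ ⟨y', rfl⟩; exact ⟨p y y', hld b y y'⟩)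
    (by rintro _ ⟨y, rfl⟩ _ ⟨y', rfl⟩; exact ⟨m y (m b y'), (hm_assoc b y (m b y')).symm⟩)

theorem surjective_mul_right (hmin : IsMinimal p m)
    (hm_assoc : ∀ x y z : X, m (m x y) z = m x (m y z))
    (hrd : ∀ x y z : X, m (p x y) z = p (m x z) (m y z)) (b : X) :
    Surjective (fun y => m y b) :=
  hmin.forall_mem ⟨_, b, rfl⟩
    (by rintro _ ⟨y, rfl⟩ _ ⟨y', rfl⟩; exact ⟨p y y', hrd y y' b⟩)
    (by rintro _ ⟨y, rfl⟩ _ ⟨y', rfl⟩; exact ⟨m (m y b) y', hm_assoc (m y b) y' b⟩)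

theorem exists_add_eq_of_mul_right_id (hmin : IsMinimal p m)
    (hp_assoc : ∀ x y z : X, p (p x y) z = p x (p y z))
    (hld : ∀ x y z : X, m x (p y z) = p (m x y) (m x z)) {e : X} (he : ∀ x, m x e = x) :
    ∃ c, p c e = e :=
  hmin.forall_mem (A := Set.range (fun y => p y e)) ⟨_, e, rfl⟩
    (by rintro _ ⟨y, rfl⟩ _ ⟨z, rfl⟩; exact ⟨p (p y e) z, hp_assoc (p y e) z e⟩)
    (by
      rintro _ ⟨y, rfl⟩ _ ⟨z, rfl⟩
      -- `(y + e)(z + e) = ((y + e)z + y) + e`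
      refine ⟨p (m (p y e) z) y, ?_⟩
      simp only [hld, he, hp_assoc])
    e

theorem add_self_of_mul_identity (hmin : IsMinimal p m)
    (hp_assoc : ∀ x y z : X, p (p x y) z = p x (p y z))
    (hld : ∀ x y z : X, m x (p y z) = p (m x y) (m x z))
    (hrd : ∀ x y z : X, m (p x y) z = p (m x z) (m y z))
    {e : X} (he : ∀ x, m e x = x ∧ m x e = x) : p e e = e := by
  obtain ⟨c, hc⟩ := hmin.exists_add_eq_of_mul_right_id hp_assoc hld fun x => (he x).2
  refine hmin.forall_mem (A := {x | p x e = e}) ⟨c, hc⟩ ?_ ?_ e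
  · intro x (hx : p x e = e) y (hy : p y e = e)
    show p (p x y) e = e
    rw [hp_assoc, hy, hx]
  · intro x (hx : p x e = e) y (hy : p y e = e)
    have hxy : p (m x y) y = y := by simpa only [hx, (he y).1] using (hrd x e y).symm
    calc p (m x y) e = p (p (m x y) y) e := by rw [hp_assoc, hy]
      _ = e := by rw [hxy, hy]

theorem eq_of_idempotent (hmin : IsMinimal p m) {e : X} (hp : p e e = e) (hm : m e e = e)
    (x : X) : x = e :=
  hmin.forall_mem (A := {e}) ⟨e, rfl⟩ (by rintro _ rfl _ rfl; exact hp)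
    (by rintro _ rfl _ rfl; exact hm) x

end IsMinimal

end

/-- Any minimal semiring (two-sided distributivity) consists of a unique element. -/
theorem stmt_5 {X : Type*} [Nonempty X]
    (p m : X → X → X)
    (hp_assoc : ∀ x y z : X, p (p x y) z = p x (p y z))
    (hm_assoc : ∀ x y z : X, m (m x y) z = m x (m y z))
    (hld : ∀ x y z : X, m x (p y z) = p (m x y) (m x z))
    (hrd : ∀ x y z : X, m (p x y) z = p (m x z) (m y z))
    (hmin : ∀ A : Set X, A.Nonempty →
      (∀ x ∈ A, ∀ y ∈ A, p x y ∈ A) → (∀ x ∈ A, ∀ y ∈ A, m x y ∈ A) → A = Set.univ) :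
    ∃ a : X, ∀ x : X, x = a := by
  have hmin : IsMinimal p m := hmin
  obtain ⟨a⟩ := ‹Nonempty X›
  obtain ⟨e, he⟩ := exists_mul_identity_of_surjective hm_assoc
    (hmin.surjective_mul_left hm_assoc hld a) (hmin.surjective_mul_right hm_assoc hrd a)
  exact ⟨e, hmin.eq_of_idempotent (hmin.add_self_of_mul_identity hp_assoc hld hrd he) (he e).1⟩
end

section
/- Any minimal compact Hausdorff left topological semigroup consists of a unique element: if X is a nonempty compact Hausdorff space with an associative binary operation · such that for each a ∈ X the map x ↦ a·x is continuous, and every nonempty compact subset of X closed under · equals X, then X is a singleton. -/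
/-! In a minimal compact left topological semigroup every set `a·X` is a compact
subsemigroup, hence all of `X`; so `a = a·x₀` for some `x₀`, and then the closed subsemigroup
`{x | a·x = a}` is nonempty, hence all of `X`. Thus `a·x = a` for all `a, x`, every singleton is
a compact subsemigroup, and `X` is a singleton. -/

namespace MinimalCompactSemigroup

variable {X : Type*} [TopologicalSpace X]

def IsMinimalCompact (m : X → X → X) : Prop :=
  ∀ A : Set X, A.Nonempty → IsCompact A → (∀ x ∈ A, ∀ y ∈ A, m x y ∈ A) → A = Set.univ

theorem range_mul_left_eq_univ [CompactSpace X] {m : X → X → X}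
    (hassoc : ∀ x y z : X, m (m x y) z = m x (m y z)) (hmin : IsMinimalCompact m)
    {a : X} (hca : Continuous (m a)) : Set.range (m a) = Set.univ := by
  refine hmin _ ⟨_, Set.mem_range_self a⟩ (isCompact_range hca) ?_
  rintro _ ⟨x, rfl⟩ _ ⟨y, rfl⟩
  exact ⟨m x (m a y), (hassoc a x (m a y)).symm⟩

theorem mul_left_eq_self [CompactSpace X] [T1Space X] {m : X → X → X}
    (hassoc : ∀ x y z : X, m (m x y) z = m x (m y z)) (hmin : IsMinimalCompact m)
    {a : X} (hca : Continuous (m a)) (x : X) : m a x = a := by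
  have hfix : {x | m a x = a}.Nonempty :=
    Set.range_eq_univ.mp (range_mul_left_eq_univ hassoc hmin hca) a
  have hfix_univ : {x | m a x = a} = Set.univ := by
    refine hmin _ hfix (isClosed_singleton.preimage hca).isCompact ?_
    intro y hy z hz
    change m a (m y z) = a
    rw [← hassoc, hy, hz]
  exact Set.eq_univ_iff_forall.mp hfix_univ x

end MinimalCompactSemigroup

open MinimalCompactSemigroup in
/-- Any minimal compact Hausdorff left topological semigroup consists of a unique element. -/
theorem stmt_7 {X : Type*} [TopologicalSpace X] [CompactSpace X] [T2Space X] [Nonempty X]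
    (m : X → X → X)
    (hm_assoc : ∀ x y z : X, m (m x y) z = m x (m y z))
    (hmc : ∀ a : X, Continuous fun x => m a x)
    (hmin : ∀ A : Set X, A.Nonempty → IsCompact A →
      (∀ x ∈ A, ∀ y ∈ A, m x y ∈ A) → A = Set.univ) :
    ∃ a : X, ∀ x : X, x = a := by
  obtain ⟨a⟩ := ‹Nonempty X›
  have hsingleton : ({a} : Set X) = Set.univ := by
    refine hmin {a} (Set.singleton_nonempty a) isCompact_singleton ?_
    rintro x rfl y -
    exact mul_left_eq_self hm_assoc hmin (hmc x) y
  exact ⟨a, fun x => Set.eq_univ_iff_forall.mp hsingleton x⟩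
end

section
/- (van Douwen) The set {u ∈ ℕ* : for all v, w ∈ ℕ*, u·(v+w) = u·v + u·w} is nowhere dense in ℕ*. -/
/-!
Every infinite `s ⊆ ℕ` contains the range of a sequence `e` with `1 < e n` and
`e n ^ 2 < e (n + 1)`. For such `e`, a number `e x * e y + z` with `x < y` and `z < e y` lies in
`[e y, e (y + 1))`, so it determines `y`, and then `x` and `z` by division with remainder.
If an ultrafilter `u ∈ ℕ*` contains `range e`, then `u * (u + u)` contains the numbers
`e a * (e b + e c)` with `a < b < c`, while `u * u + u * u` is concentrated on the numbers
`e i * e j + e k * e l` with `i < j < k < l`. A common value would force `a = k` and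
`e i * e j = e k * e b ≥ e k > e i * e j`. Hence such `u` fail distributivity already for
`v = w = u`, and they form a dense open subset of `ℕ*`.
-/

attribute [local instance] Ultrafilter.mul Ultrafilter.add

open Filter Set

theorem Ultrafilter.le_cofinite_of_forall_ne_pure {α : Type*} {u : Ultrafilter α}
    (hu : ∀ a, u ≠ pure a) : (u : Filter α) ≤ cofinite :=
  u.le_cofinite_or_eq_pure.resolve_right fun ⟨a, ha⟩ => hu a ha

theorem Ultrafilter.infinite_of_mem {α : Type*} {u : Ultrafilter α} (hu : ∀ a, u ≠ pure a)
    {s : Set α} (hs : s ∈ u) : s.Infinite := fun hfin =>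
  let ⟨a, _, ha⟩ := Ultrafilter.eq_pure_of_finite_mem hfin hs
  hu a ha

theorem Set.Infinite.exists_ultrafilter_mem {α : Type*} {s : Set α} (hs : s.Infinite) :
    ∃ u : Ultrafilter α, (∀ a, u ≠ pure a) ∧ s ∈ u := by
  have := hs.cofinite_inf_principal_neBot
  refine ⟨.of (cofinite ⊓ 𝓟 s), fun a ha => ?_,
    Ultrafilter.of_le _ (mem_inf_of_right (mem_principal_self s))⟩
  have : ({a}ᶜ : Set α) ∈ Ultrafilter.of (cofinite ⊓ 𝓟 s) :=
    Ultrafilter.of_le _ (mem_inf_of_left (finite_singleton a).compl_mem_cofinite)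
  simp [ha] at this

theorem Ultrafilter.eventually_exists_gt_apply_eq {u : Ultrafilter ℕ} (hu : ∀ n, u ≠ pure n)
    {e : ℕ → ℕ} (he : StrictMono e) (hr : range e ∈ u) (a : ℕ) :
    ∀ᶠ x in (u : Filter ℕ), ∃ b, a < b ∧ e b = x := by
  have hgt : ∀ᶠ x in (u : Filter ℕ), e a < x :=
    (le_cofinite_of_forall_ne_pure hu).trans Nat.cofinite_eq_atTop.le (eventually_gt_atTop _)
  filter_upwards [hr, hgt]
  rintro _ ⟨b, rfl⟩ hb
  exact ⟨b, he.lt_iff_lt.1 hb, rfl⟩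

structure SquareLacunary (e : ℕ → ℕ) : Prop where
  one_lt : ∀ n, 1 < e n
  sq_lt : ∀ n, e n ^ 2 < e (n + 1)

theorem Set.Infinite.exists_squareLacunary_range_subset {s : Set ℕ} (hs : s.Infinite) :
    ∃ e, SquareLacunary e ∧ range e ⊆ s := by
  choose f hfs hfgt using fun m : ℕ => hs.exists_gt m
  let e : ℕ → ℕ := fun n => Nat.rec (f 1) (fun _ x => f (x ^ 2)) n
  have he : SquareLacunary e := by
    refine ⟨fun n => ?_, fun n => hfgt _⟩
    induction n with
    | zero => exact hfgt 1
    | succ n ih =>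
      have := hfgt (e n ^ 2)
      dsimp only [e] at this ih ⊢
      nlinarith
  refine ⟨e, he, ?_⟩
  rintro _ ⟨n, rfl⟩
  cases n <;> exact hfs _

namespace SquareLacunary

variable {e : ℕ → ℕ}

theorem strictMono (he : SquareLacunary e) : StrictMono e :=
  strictMono_nat_of_lt_succ fun n => by nlinarith [he.one_lt n, he.sq_lt n]

theorem mul_lt_of_lt (he : SquareLacunary e) {i j k : ℕ} (hi : i < k) (hj : j < k) :
    e i * e j < e k := by
  obtain ⟨m, rfl⟩ : ∃ m, k = m + 1 := ⟨k - 1, by omega⟩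
  calc e i * e j ≤ e m * e m :=
        Nat.mul_le_mul (he.strictMono.monotone (by omega)) (he.strictMono.monotone (by omega))
    _ = e m ^ 2 := (sq _).symm
    _ < e (m + 1) := he.sq_lt m

theorem mul_add_mem_Ico (he : SquareLacunary e) {x y z : ℕ} (hxy : x < y) (hz : z < e y) :
    e x * e y + z ∈ Ico (e y) (e (y + 1)) := by
  have := he.strictMono hxy
  have := he.one_lt x
  have := he.sq_lt y
  constructor <;> nlinarith

theorem eq_of_mem_Ico (he : SquareLacunary e) {m n a : ℕ} (hm : a ∈ Ico (e m) (e (m + 1)))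
    (hn : a ∈ Ico (e n) (e (n + 1))) : m = n := by
  by_contra hmn
  exact disjoint_left.1 (he.strictMono.monotone.pairwise_disjoint_on_Ico_succ hmn) hm hn

theorem mul_add_inj (he : SquareLacunary e) {x y z x' y' z' : ℕ} (hxy : x < y) (hz : z < e y)
    (hxy' : x' < y') (hz' : z' < e y') (h : e x * e y + z = e x' * e y' + z') :
    x = x' ∧ y = y' ∧ z = z' := by
  obtain rfl : y = y' :=
    he.eq_of_mem_Ico (he.mul_add_mem_Ico hxy hz) (h ▸ he.mul_add_mem_Ico hxy' hz')
  obtain rfl : z = z' := by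
    simpa only [Nat.mul_add_mod_of_lt hz, Nat.mul_add_mod_of_lt hz'] using congrArg (· % e y) h
  have hy : 0 < e y := by have := he.one_lt y; omega
  exact ⟨he.strictMono.injective (Nat.eq_of_mul_eq_mul_right hy (by omega)), rfl, rfl⟩

theorem add_mul_ne_mul_add (he : SquareLacunary e) {i j k l a b c : ℕ} (hij : i < j)
    (hjk : j < k) (hkl : k < l) (hab : a < b) (hbc : b < c) :
    e i * e j + e k * e l ≠ e a * (e b + e c) := by
  intro h
  have hjl := hjk.trans hkl
  obtain ⟨rfl, -, hprod⟩ := he.mul_add_inj hkl (he.mul_lt_of_lt (hij.trans hjl) hjl)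
    (hab.trans hbc) (he.mul_lt_of_lt (hab.trans hbc) hbc) (by rw [mul_add] at h; omega)
  have := he.mul_lt_of_lt (hij.trans hjk) hjk
  have := he.one_lt b
  nlinarith

theorem mul_add_ne_mul_add_mul (he : SquareLacunary e) {u : Ultrafilter ℕ} (hu : ∀ n, u ≠ pure n)
    (hr : range e ∈ u) : u * (u + u) ≠ u * u + u * u := by
  let A := {x | ∃ a b c, a < b ∧ b < c ∧ e a * (e b + e c) = x}
  have hgt := Ultrafilter.eventually_exists_gt_apply_eq hu he.strictMono hr
  have hA : ∀ᶠ x in ↑(u * (u + u)), x ∈ A := by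
    rw [Ultrafilter.eventually_mul]
    filter_upwards [hr]
    rintro _ ⟨a, rfl⟩
    rw [Ultrafilter.eventually_add]
    filter_upwards [hgt a]
    rintro _ ⟨b, hab, rfl⟩
    filter_upwards [hgt b]
    rintro _ ⟨c, hbc, rfl⟩
    exact ⟨a, b, c, hab, hbc, rfl⟩
  intro h
  rw [h, Ultrafilter.eventually_add, Ultrafilter.eventually_mul] at hA
  obtain ⟨_, ⟨i, rfl⟩, hi⟩ := (Filter.Eventually.and hr hA).exists
  obtain ⟨_, ⟨j, hij, rfl⟩, hj⟩ := ((hgt i).and hi).exists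
  rw [Ultrafilter.eventually_mul] at hj
  obtain ⟨_, ⟨k, hjk, rfl⟩, hk⟩ := ((hgt j).and hj).exists
  obtain ⟨_, ⟨l, hkl, rfl⟩, a, b, c, hab, hbc, habc⟩ := ((hgt k).and hk).exists
  exact he.add_mul_ne_mul_add hij hjk hkl hab hbc habc.symm

end SquareLacunary

theorem isOpen_setOf_exists_squareLacunary :
    IsOpen {u : Ultrafilter ℕ | ∃ e, SquareLacunary e ∧ range e ∈ u} :=
  isOpen_iff_forall_mem_open.2 fun _ ⟨e, he, hu⟩ =>
    ⟨{v | range e ∈ v}, fun _ hv => ⟨e, he, hv⟩, ultrafilter_isOpen_basic _, hu⟩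

/-- (van Douwen) The set of `u ∈ ℕ*` that left-distribute over all `v, w ∈ ℕ*`
is nowhere dense in `ℕ*`. -/
theorem stmt_8 :
    IsNowhereDense {u : {u : Ultrafilter ℕ // ∀ n : ℕ, u ≠ pure n} |
      ∀ v w : {u : Ultrafilter ℕ // ∀ n : ℕ, u ≠ pure n},
        (u : Ultrafilter ℕ) * ((v : Ultrafilter ℕ) + (w : Ultrafilter ℕ)) =
          (u : Ultrafilter ℕ) * v + (u : Ultrafilter ℕ) * w} := by
  let T : Set {u : Ultrafilter ℕ // ∀ n : ℕ, u ≠ pure n} :=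
    Subtype.val ⁻¹' {u | ∃ e, SquareLacunary e ∧ range e ∈ u}
  have hT_open : IsOpen T := isOpen_setOf_exists_squareLacunary.preimage continuous_subtype_val
  have hT_dense : Dense T := by
    rw [(ultrafilterBasis_is_basis.isInducing Topology.IsEmbedding.subtypeVal.isInducing).dense_iff]
    rintro _ ⟨_, ⟨s, rfl⟩, rfl⟩ ⟨x, hx⟩
    obtain ⟨e, he, hes⟩ := (Ultrafilter.infinite_of_mem x.2 hx).exists_squareLacunary_range_subset
    obtain ⟨y, hy, hey⟩ :=
      (infinite_range_of_injective he.strictMono.injective).exists_ultrafilter_mem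
    exact ⟨⟨y, hy⟩, mem_of_superset hey hes, e, he, hey⟩
  refine (isClosed_isNowhereDense_iff_compl.2
    ⟨by rwa [compl_compl], by rwa [compl_compl]⟩).2.mono ?_
  rintro u hu ⟨e, he, hr⟩
  exact he.mul_add_ne_mul_add_mul u.2 hr (hu u u)
end

section
/- (van Douwen) The set {u ∈ ℕ* : for all v, w ∈ ℕ*, (u+v)·w = u·w + v·w} is nowhere dense in ℕ*. -/
/-!
Distinct elements of `S = {2 ^ 2 ^ i}` are square-separated, so every `x` has at most one
scale `k ∈ S` with `k ≤ x < k²`. Let `A = nondvdAtScale S` be the set of `x` having a scale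
that does not divide `x`, and fix `w ∈ ℕ*` with `S ∈ w`. For any `u ∈ ℕ*`, a typical element
of `(u + w) · w` is `(n + m) k` with `n + m < k ∈ S`: its scale `k` divides it, so
`A ∉ (u + w) · w`. A typical element of `u · w + w · w` is `n k + m k'` with `0 < n k` and
`n k + m < k' ∈ S`: its scale `k'` does not divide it, so `A ∈ u · w + w · w`. Hence no
`u ∈ ℕ*` is right distributive and the set is empty.
-/

attribute [local instance] Ultrafilter.mul Ultrafilter.add

open Filter Set

def SquareSeparated (S : Set ℕ) : Prop :=
  ∀ a ∈ S, ∀ b ∈ S, a < b → a ^ 2 ≤ b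

def nondvdAtScale (S : Set ℕ) : Set ℕ :=
  {x | ∃ k ∈ S, x ∈ Ico k (k ^ 2) ∧ ¬k ∣ x}

theorem squareSeparated_range_two_pow_two_pow : SquareSeparated (range fun i ↦ 2 ^ 2 ^ i) := by
  rintro _ ⟨i, rfl⟩ _ ⟨j, rfl⟩ hlt
  have hij : i < j := (Nat.pow_lt_pow_iff_right (by norm_num)).1 <|
    (Nat.pow_lt_pow_iff_right (by norm_num)).1 hlt
  rw [← pow_mul, ← pow_succ]
  exact Nat.pow_le_pow_right (by norm_num) (Nat.pow_le_pow_right (by norm_num) hij)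

theorem infinite_range_two_pow_two_pow : (range fun i : ℕ ↦ 2 ^ 2 ^ i).Infinite :=
  infinite_range_of_injective fun _ _ h ↦
    Nat.pow_right_injective le_rfl (Nat.pow_right_injective le_rfl h)

namespace SquareSeparated

variable {S : Set ℕ}

theorem eq_of_mem_Ico (hS : SquareSeparated S) {k k' x : ℕ} (hk : k ∈ S) (hk' : k' ∈ S)
    (hx : x ∈ Ico k (k ^ 2)) (hx' : x ∈ Ico k' (k' ^ 2)) : k = k' := by
  simp only [mem_Ico] at hx hx'
  rcases lt_trichotomy k k' with hlt | heq | hgt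
  · have := hS k hk k' hk' hlt
    omega
  · exact heq
  · have := hS k' hk' k hk hgt
    omega

theorem mul_notMem_nondvdAtScale (hS : SquareSeparated S) {a k : ℕ} (hk : k ∈ S)
    (ha₀ : 0 < a) (hak : a < k) : a * k ∉ nondvdAtScale S := by
  have hx : a * k ∈ Ico k (k ^ 2) :=
    ⟨Nat.le_mul_of_pos_left k ha₀, by rw [sq]; exact Nat.mul_lt_mul_of_pos_right hak (by omega)⟩
  rintro ⟨k', hk', hx', hndvd⟩
  rw [← hS.eq_of_mem_Ico hk hk' hx hx'] at hndvd
  exact hndvd (dvd_mul_left k a)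

end SquareSeparated

theorem add_mul_mem_nondvdAtScale {S : Set ℕ} {a b k : ℕ} (hk : k ∈ S) (ha₀ : 0 < a)
    (hb₀ : 0 < b) (hab : a + b < k) : a + b * k ∈ nondvdAtScale S := by
  refine ⟨k, hk, ⟨?_, ?_⟩, ?_⟩
  · nlinarith
  · nlinarith
  · rw [Nat.dvd_add_left (dvd_mul_left k b)]
    exact Nat.not_dvd_of_pos_of_lt ha₀ (by omega)

theorem Ultrafilter.exists_ne_pure_mem {α : Type*} {s : Set α} (hs : s.Infinite) :
    ∃ w : Ultrafilter α, (∀ a, w ≠ pure a) ∧ s ∈ w := by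
  have := hs.cofinite_inf_principal_neBot
  obtain ⟨w, hw⟩ := exists_ultrafilter_le (cofinite ⊓ 𝓟 s)
  refine ⟨w, fun a h ↦ ?_, le_principal_iff.1 (hw.trans inf_le_right)⟩
  have : {a}ᶜ ∈ w := hw.trans inf_le_left (finite_singleton a).compl_mem_cofinite
  simp [h] at this

theorem Ultrafilter.eventually_pos_of_ne_pure_zero {u : Ultrafilter ℕ} (hu : u ≠ pure 0) :
    ∀ᶠ n in u, 0 < n := by
  have : {0}ᶜ ∈ u := Ultrafilter.compl_mem_iff_notMem.2 fun h ↦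
    hu (by simpa using eq_pure_of_finite_mem (finite_singleton 0) h)
  exact Filter.mem_of_superset this fun n hn ↦ Nat.pos_of_ne_zero hn

theorem Ultrafilter.eventually_gt_of_ne_pure {w : Ultrafilter ℕ} (hw : ∀ n, w ≠ pure n) (t : ℕ) :
    ∀ᶠ m in w, t < m :=
  (w.le_cofinite_or_eq_pure.resolve_right fun ⟨n, h⟩ ↦ hw n h).trans Nat.cofinite_eq_atTop.le
    (eventually_gt_atTop t)

theorem add_mul_ne_mul_add_mul {S : Set ℕ} (hS : SquareSeparated S) {u w : Ultrafilter ℕ}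
    (hu : u ≠ pure 0) (hw : ∀ n, w ≠ pure n) (hSw : S ∈ w) :
    (u + w) * w ≠ u * w + w * w := by
  have hS' : ∀ᶠ k in w, k ∈ S := hSw
  have hgt := Ultrafilter.eventually_gt_of_ne_pure hw
  have hnotMem : ∀ᶠ x in ((u + w) * w : Ultrafilter ℕ), x ∉ nondvdAtScale S := by
    rw [Ultrafilter.eventually_mul, Ultrafilter.eventually_add]
    refine .of_forall fun n ↦ (hgt 0).mono fun m hm ↦ ?_
    filter_upwards [hS', hgt (n + m)] with k hk hnmk
    exact hS.mul_notMem_nondvdAtScale hk (by omega) hnmk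
  have hmem : ∀ᶠ x in (u * w + w * w : Ultrafilter ℕ), x ∈ nondvdAtScale S := by
    rw [Ultrafilter.eventually_add, Ultrafilter.eventually_mul]
    filter_upwards [Ultrafilter.eventually_pos_of_ne_pure_zero hu] with n hn
    filter_upwards [hgt 0] with k hk
    rw [Ultrafilter.eventually_mul]
    filter_upwards [hgt 0] with m hm
    filter_upwards [hS', hgt (n * k + m)] with k' hk' hk'gt
    exact add_mul_mem_nondvdAtScale hk' (Nat.mul_pos hn hk) hm hk'gt
  intro h
  rw [h] at hnotMem
  obtain ⟨x, hx, hx'⟩ := (hmem.and hnotMem).exists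
  exact hx' hx

/-- (van Douwen) The set of `u ∈ ℕ*` that right-distribute over all `v, w ∈ ℕ*`
is nowhere dense in `ℕ*`. -/
theorem stmt_9 :
    IsNowhereDense {u : {u : Ultrafilter ℕ // ∀ n : ℕ, u ≠ pure n} |
      ∀ v w : {u : Ultrafilter ℕ // ∀ n : ℕ, u ≠ pure n},
        ((u : Ultrafilter ℕ) + (v : Ultrafilter ℕ)) * (w : Ultrafilter ℕ) =
          (u : Ultrafilter ℕ) * w + (v : Ultrafilter ℕ) * w} := by
  obtain ⟨w, hw, hSw⟩ := Ultrafilter.exists_ne_pure_mem infinite_range_two_pow_two_pow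
  convert isNowhereDense_empty
  refine eq_empty_of_forall_notMem fun u hu ↦ ?_
  exact add_mul_ne_mul_add_mul squareSeparated_range_two_pow_two_pow (u.2 0) hw hSw
    (hu ⟨w, hw⟩ ⟨w, hw⟩)
end

section
/- The algebra (ℕ*, +, ·) has no common idempotents: there is no nonprincipal ultrafilter u on ℕ with u + u = u and u · u = u. -/
attribute [local instance] Ultrafilter.mul Ultrafilter.add

open Filter Topology

/-!
Let `v` be the 2-adic valuation and `‖log₂ n‖` the distance from `log₂ n` to the nearest integer.
If `u + u = u`, then `u`-almost every `n` is divisible by any given `2 ^ k`, and `u` avoids the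
powers of two. If `u * u = u`, then `log₂ n` tends to `ℤ` along `u`: the limit of `log₂ n` in the
compact circle `ℝ / ℤ` is an idempotent there, hence `0`.

Now consider the `n` with `‖log₂ n‖ ≤ 2 ^ (-v n)`. Because `u = u + u`, these form a `u`-large set:
for `x ≠ 0` and `u`-almost every `y` (divisible by `2 ^ (v x + 1)`, much larger than `x`, with
`log₂ y` very close to `ℤ`) we get `v (x + y) = v x` and `log₂ (x + y) ≈ log₂ y`. Because
`u = u * u`, they do not: for `x` not a power of two, `‖log₂ x‖ = h > 0`, and for `u`-almost every `y`
(divisible by a large power of two, with `‖log₂ y‖ < h / 2`) the product `x * y` has large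
valuation while `‖log₂ (x * y)‖ > h / 2`.
-/

theorem padicValNat_add_of_pow_succ_dvd {p x y : ℕ} [Fact p.Prime] (hx : x ≠ 0)
    (hy : p ^ (padicValNat p x + 1) ∣ y) : padicValNat p (x + y) = padicValNat p x := by
  have hxy : x + y ≠ 0 := by omega
  refine le_antisymm (Nat.le_of_lt_succ ?_) ?_
  · by_contra! h
    exact pow_succ_padicValNat_not_dvd hx
      ((Nat.dvd_add_left hy).1 ((padicValNat_dvd_iff_le hxy).2 h))
  · exact (padicValNat_dvd_iff_le hxy).1
      (dvd_add pow_padicValNat_dvd ((pow_dvd_pow p (Nat.le_succ _)).trans hy))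

theorem abs_logb_two_add_sub_logb_le {x y : ℝ} (hx : 0 ≤ x) (hy : 0 < y) :
    |Real.logb 2 (x + y) - Real.logb 2 y| ≤ 2 * (x / y) := by
  have hlog2 : 1 / 2 < Real.log 2 := by linarith [Real.log_two_gt_d9]
  have hratio : 1 ≤ (x + y) / y := by rw [le_div_iff₀ hy]; linarith
  rw [← Real.logb_div (by positivity) hy.ne', abs_of_nonneg (Real.logb_nonneg one_lt_two hratio),
    Real.logb, div_le_iff₀ (by positivity)]
  calc Real.log ((x + y) / y) ≤ (x + y) / y - 1 := Real.log_le_sub_one_of_pos (by positivity)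
    _ = x / y := by field_simp; ring
    _ ≤ 2 * (x / y) * Real.log 2 := by nlinarith [div_nonneg hx hy.le]

/-- `‖logbCircle n‖` is the distance from `log₂ n` to the nearest integer. -/
noncomputable def logbCircle (n : ℕ) : UnitAddCircle := (Real.logb 2 n : ℝ)

theorem logbCircle_mul {x y : ℕ} (hx : x ≠ 0) (hy : y ≠ 0) :
    logbCircle (x * y) = logbCircle x + logbCircle y := by
  rw [logbCircle, Nat.cast_mul, Real.logb_mul (Nat.cast_ne_zero.2 hx) (Nat.cast_ne_zero.2 hy),
    AddCircle.coe_add]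
  rfl

theorem norm_logbCircle_add_sub_le (x : ℕ) {y : ℕ} (hy : y ≠ 0) :
    ‖logbCircle (x + y) - logbCircle y‖ ≤ 2 * ((x : ℝ) / y) := by
  rw [logbCircle, logbCircle, ← AddCircle.coe_sub, Nat.cast_add]
  exact QuotientAddGroup.norm_mk_le_norm.trans
    (abs_logb_two_add_sub_logb_le (Nat.cast_nonneg x) (Nat.cast_pos.2 (Nat.pos_of_ne_zero hy)))

theorem exists_eq_two_pow_of_logbCircle_eq_zero {n : ℕ} (hn : n ≠ 0) (h : logbCircle n = 0) :
    ∃ k : ℕ, n = 2 ^ k := by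
  obtain ⟨m, hm⟩ := (AddCircle.coe_eq_zero_iff 1).1 h
  rw [zsmul_one] at hm
  have hn1 : (1 : ℝ) ≤ n := Nat.one_le_cast.2 (Nat.pos_of_ne_zero hn)
  lift m to ℕ using (by exact_mod_cast hm ▸ Real.logb_nonneg one_lt_two hn1)
  refine ⟨m, ?_⟩
  have := Real.rpow_logb zero_lt_two (by norm_num) (zero_lt_one.trans_le hn1)
  rw [← hm] at this
  exact_mod_cast this.symm

namespace Ultrafilter

theorem le_atTop_of_forall_ne_pure {u : Ultrafilter ℕ} (hu : ∀ n, u ≠ pure n) :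
    (u : Filter ℕ) ≤ atTop :=
  Nat.cofinite_eq_atTop ▸ u.le_cofinite_or_eq_pure.resolve_right fun ⟨n, hn⟩ => hu n hn

theorem eventually_eq_zero_of_add_self {M G : Type*} [Add M] [AddLeftCancelMonoid G] [Finite G]
    {u : Ultrafilter M} (hu : u + u = u) (f : M →ₙ+ G) : ∀ᶠ x in u, f x = 0 := by
  obtain ⟨c, hc⟩ := (u.map f).eq_pure_of_finite
  have hfc : ∀ᶠ x in u, f x = c := show {c} ∈ u.map f from hc ▸ rfl
  have hsum : ∀ᶠ x in u, ∀ᶠ y in u, f (x + y) = c := (u.eventually_add u _).1 (by rwa [hu])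
  obtain ⟨x, hxc, hx⟩ := (hfc.and hsum).exists
  obtain ⟨y, hyc, hxy⟩ := (hfc.and hx).exists
  have hcc : c + c = c := by simpa only [map_add, hxc, hyc] using hxy
  rwa [add_eq_left.1 hcc] at hfc

theorem eventually_dvd_of_add_self {u : Ultrafilter ℕ} (hu : u + u = u) (m : ℕ) [NeZero m] :
    ∀ᶠ n in u, m ∣ n := by
  filter_upwards [eventually_eq_zero_of_add_self hu (Nat.castAddMonoidHom (ZMod m)).toAddHom]
    with n hn
  exact (ZMod.natCast_eq_zero_iff n m).1 hn

theorem tendsto_zero_of_mul_self {M G : Type*} [Mul M] [NormedAddCommGroup G] [CompactSpace G]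
    {u : Ultrafilter M} (hu : u * u = u) {f : M → G}
    (hf : ∀ᶠ x in u, ∀ᶠ y in u, f (x * y) = f x + f y) : Tendsto f u (𝓝 0) := by
  obtain ⟨θ, -, hθ⟩ := isCompact_univ.ultrafilter_le_nhds (u.map f) (by simp)
  have hfθ : Tendsto f u (𝓝 θ) := hθ
  -- the limit `θ` satisfies `θ + θ = θ`, up to an arbitrarily small error
  suffices θ = 0 from this ▸ hfθ
  refine norm_le_zero_iff.1 (le_of_forall_pos_le_add fun ε hε => ?_)
  have hnear : ∀ᶠ x in u, ‖f x - θ‖ < ε / 3 := by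
    simpa only [dist_eq_norm] using Metric.tendsto_nhds.1 hfθ (ε / 3) (by positivity)
  have hprod : ∀ᶠ x in u, ∀ᶠ y in u, ‖f (x * y) - θ‖ < ε / 3 :=
    (u.eventually_mul u fun z => ‖f z - θ‖ < ε / 3).1 (by rwa [hu])
  obtain ⟨x, hx, hxy, hf⟩ := (hnear.and (hprod.and hf)).exists
  obtain ⟨y, hy, hxy, hf⟩ := (hnear.and (hxy.and hf)).exists
  calc ‖θ‖ = ‖(f (x * y) - θ) - (f x - θ) - (f y - θ)‖ := by rw [hf]; congr 1; abel
    _ ≤ ‖f (x * y) - θ‖ + ‖f x - θ‖ + ‖f y - θ‖ :=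
      (norm_sub_le _ _).trans (add_le_add (norm_sub_le _ _) le_rfl)
    _ ≤ 0 + ε := by linarith

variable {u : Ultrafilter ℕ}

theorem tendsto_logbCircle_of_mul_self (hu : ∀ n, u ≠ pure n) (hmul : u * u = u) :
    Tendsto logbCircle u (𝓝 0) := by
  have hne := (eventually_ne_atTop 0).filter_mono (le_atTop_of_forall_ne_pure hu)
  refine tendsto_zero_of_mul_self hmul ?_
  filter_upwards [hne] with x hx
  filter_upwards [hne] with y hy
  exact logbCircle_mul hx hy

theorem eventually_ne_two_pow_of_add_self (hu : ∀ n, u ≠ pure n) (hadd : u + u = u) :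
    ∀ᶠ n in u, ¬∃ k, n = 2 ^ k := by
  refine Ultrafilter.eventually_not.2 fun hpow => ?_
  have hne := (eventually_ne_atTop 0).filter_mono (le_atTop_of_forall_ne_pure hu)
  have hsum : ∀ᶠ x in u, ∀ᶠ y in u, ∃ k, x + y = 2 ^ k :=
    (u.eventually_add u fun z => ∃ k, z = 2 ^ k).1 (by rwa [hadd])
  obtain ⟨x, hx0, hx⟩ := (hne.and hsum).exists
  obtain ⟨y, hy0, hdvd, k, hk⟩ :=
    (hne.and ((eventually_dvd_of_add_self hadd (2 ^ (padicValNat 2 x + 1))).and hx)).exists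
  have hkx : k = padicValNat 2 x := by
    rw [← padicValNat_add_of_pow_succ_dvd hx0 hdvd, hk, padicValNat.prime_pow]
  have : 2 ^ k ≤ x := Nat.le_of_dvd (Nat.pos_of_ne_zero hx0) (hkx ▸ pow_padicValNat_dvd)
  omega

theorem eventually_norm_logbCircle_le (hu : ∀ n, u ≠ pure n) (hadd : u + u = u)
    (hmul : u * u = u) : ∀ᶠ n in u, ‖logbCircle n‖ ≤ ((2 : ℝ) ^ padicValNat 2 n)⁻¹ := by
  have hatTop := le_atTop_of_forall_ne_pure hu
  rw [← hadd, Ultrafilter.eventually_add]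
  filter_upwards [(eventually_ne_atTop 0).filter_mono hatTop] with x hx
  set A := padicValNat 2 x
  have hε : (0 : ℝ) < ((2 : ℝ) ^ A)⁻¹ / 2 := by positivity
  filter_upwards [eventually_dvd_of_add_self hadd (2 ^ (A + 1)),
    NormedAddGroup.tendsto_nhds_zero.1 (tendsto_logbCircle_of_mul_self hu hmul) _ hε,
    (eventually_ge_atTop (4 * 2 ^ A * x)).filter_mono hatTop] with y hdvd hlog hy
  have hy0 : 0 < y := lt_of_lt_of_le (by positivity) hy
  have hratio : 2 * ((x : ℝ) / y) ≤ ((2 : ℝ) ^ A)⁻¹ / 2 := by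
    have hy' : (4 * 2 ^ A * x : ℝ) ≤ y := by exact_mod_cast hy
    calc 2 * ((x : ℝ) / y) = (4 * 2 ^ A * x) / y * (((2 : ℝ) ^ A)⁻¹ / 2) := by field_simp; ring
      _ ≤ 1 * (((2 : ℝ) ^ A)⁻¹ / 2) := by gcongr; exact div_le_one_of_le₀ hy' (by positivity)
      _ = ((2 : ℝ) ^ A)⁻¹ / 2 := one_mul _
  rw [padicValNat_add_of_pow_succ_dvd hx hdvd]
  calc ‖logbCircle (x + y)‖ ≤ ‖logbCircle y‖ + ‖logbCircle (x + y) - logbCircle y‖ :=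
        norm_le_insert' _ _
    _ ≤ ((2 : ℝ) ^ A)⁻¹ / 2 + ((2 : ℝ) ^ A)⁻¹ / 2 :=
        add_le_add hlog.le ((norm_logbCircle_add_sub_le x hy0.ne').trans hratio)
    _ = ((2 : ℝ) ^ A)⁻¹ := add_halves _

theorem not_eventually_norm_logbCircle_le (hu : ∀ n, u ≠ pure n) (hadd : u + u = u)
    (hmul : u * u = u) : ¬∀ᶠ n in u, ‖logbCircle n‖ ≤ ((2 : ℝ) ^ padicValNat 2 n)⁻¹ := by
  intro hclose
  have hne := (eventually_ne_atTop 0).filter_mono (le_atTop_of_forall_ne_pure hu)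
  have hprod : ∀ᶠ x in u, ∀ᶠ y in u, ‖logbCircle (x * y)‖ ≤ ((2 : ℝ) ^ padicValNat 2 (x * y))⁻¹ :=
    (u.eventually_mul u fun z => ‖logbCircle z‖ ≤ ((2 : ℝ) ^ padicValNat 2 z)⁻¹).1
      (by rwa [hmul])
  obtain ⟨x, hx0, hx2, hx⟩ := (hne.and ((eventually_ne_two_pow_of_add_self hu hadd).and hprod)).exists
  have hpos : 0 < ‖logbCircle x‖ / 2 :=
    half_pos (norm_pos_iff.2 fun h => hx2 (exists_eq_two_pow_of_logbCircle_eq_zero hx0 h))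
  obtain ⟨K, hK⟩ := exists_pow_lt_of_lt_one hpos (by norm_num : (2 : ℝ)⁻¹ < 1)
  obtain ⟨y, hy0, hdvd, hlog, hxy⟩ := (hne.and ((eventually_dvd_of_add_self hadd (2 ^ K)).and
    ((NormedAddGroup.tendsto_nhds_zero.1 (tendsto_logbCircle_of_mul_self hu hmul) _ hpos).and
      hx))).exists
  have hK' : K ≤ padicValNat 2 (x * y) :=
    (padicValNat_dvd_iff_le (mul_ne_zero hx0 hy0)).1 (hdvd.mul_left x)
  have hsmall : ‖logbCircle (x * y)‖ ≤ (2 ^ K)⁻¹ :=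
    hxy.trans (inv_anti₀ (by positivity) (pow_le_pow_right₀ one_le_two hK'))
  have htri : ‖logbCircle x‖ ≤ ‖logbCircle (x * y)‖ + ‖logbCircle y‖ :=
    logbCircle_mul hx0 hy0 ▸ norm_le_add_norm_add _ _
  rw [inv_pow] at hK
  linarith

end Ultrafilter

/-- The algebra `(ℕ*, +, ·)` has no common idempotents. -/
theorem stmt_10 :
    ¬ ∃ u : Ultrafilter ℕ, (∀ n : ℕ, u ≠ pure n) ∧ u + u = u ∧ u * u = u := by
  rintro ⟨u, hu, hadd, hmul⟩
  exact u.not_eventually_norm_logbCircle_le hu hadd hmul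
    (u.eventually_norm_logbCircle_le hu hadd hmul)
end

section
/- No closed subalgebra of (ℕ*, +, ·) satisfies the left distributivity law: there is no nonempty subset A of ℕ*, closed in the space of ultrafilters on ℕ, which is closed under + and under ·, and such that u·(v+w) = u·v + u·w for all u, v, w ∈ A. -/
/-!
Suppose `z ∈ ℕ*` satisfies `z + z = z = z * z`. The mantissas `n / 2 ^ ⌊log₂ n⌋ ∈ [1, 2]`
converge along `z` to some `L`; the mantissa of a product is the product of the mantissas up to a
factor `2`, so multiplicative idempotence gives `L² ∈ {L, 2L}`, i.e. `L ∈ {1, 2}`. Hence for every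
`j`, `z`-almost every `n` lies within `2 ^ (k - j)` of some `2 ^ k`. Additive idempotence makes
`z`-almost every `n` divisible by any given power of two, so for `z`-typical `y ≫ x` the number
`x + y` is close to a power of two at level `x` without being divisible by `2 ^ x`. Thus `z`-almost
every `n` is close to a power of two at some level `j` with `2 ^ j ∤ n`. But if `x * y` and `y` are
close at level `j + 2` then `x` is close at level `j`, which bounds `j` when `x` is not a power of
two, while `2 ^ j ∣ y ∣ x * y` for typical `y`: multiplicative idempotence is contradicted.

A closed subalgebra `A` with left distributivity contains such a `z`: take an additive idempotent
`p ∈ A` and a multiplicative idempotent `z = x * p` of the compact semigroup `A * p`; then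
`z + z = x * (p + p) = z`.
-/

attribute [local instance] Ultrafilter.mul Ultrafilter.add
attribute [local instance] Ultrafilter.semigroup Ultrafilter.addSemigroup

open Filter Topology

def NearPowTwo (j n : ℕ) : Prop := ∃ k : ℕ, 2 ^ j * |(n : ℝ) - 2 ^ k| ≤ 2 ^ k

namespace NearPowTwo

lemma mono {i j n : ℕ} (hij : i ≤ j) (h : NearPowTwo j n) : NearPowTwo i n := by
  obtain ⟨k, hk⟩ := h
  exact ⟨k, le_trans (by gcongr; norm_num) hk⟩

lemma add_left {j x y : ℕ} (hy : NearPowTwo (j + 1) y) (hxy : x * 2 ^ (j + 2) ≤ y) :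
    NearPowTwo j (x + y) := by
  obtain ⟨k, hk⟩ := hy
  refine ⟨k, ?_⟩
  have hxy' : (x : ℝ) * (2 ^ j * 4) ≤ y := by
    rw [pow_add] at hxy; exact_mod_cast hxy
  rw [pow_succ] at hk
  set P : ℝ := 2 ^ j
  set K : ℝ := 2 ^ k
  have hP : 1 ≤ P := one_le_pow₀ one_le_two
  have hK : 0 < K := by positivity
  have hyK : 2 * P * y ≤ K * (2 * P + 1) := by
    have := le_abs_self ((y : ℝ) - K); nlinarith
  have hx : P * x ≤ K / 2 := by
    have : P * (8 * (P * x)) ≤ P * (3 * K) := by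
      nlinarith [mul_le_mul_of_nonneg_left hxy' (by linarith : (0 : ℝ) ≤ 2 * P)]
    have := le_of_mul_le_mul_left this (by linarith)
    linarith
  calc P * |((x + y : ℕ) : ℝ) - K| ≤ P * (x + |(y : ℝ) - K|) := by
        push_cast
        gcongr
        rw [add_sub_assoc]
        exact (abs_add_le _ _).trans (by rw [Nat.abs_cast])
    _ ≤ K := by nlinarith

lemma of_mul {j x y : ℕ} (hx : 0 < x) (hy : NearPowTwo (j + 2) y)
    (hxy : NearPowTwo (j + 2) (x * y)) : NearPowTwo j x := by
  obtain ⟨l, hl⟩ := hy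
  obtain ⟨k, hk⟩ := hxy
  rw [pow_add] at hl hk
  norm_num at hl hk
  set P : ℝ := 2 ^ j
  have hP : 1 ≤ P := one_le_pow₀ one_le_two
  have hx1 : (1 : ℝ) ≤ x := by exact_mod_cast hx
  have hmain : P * 4 * |(x : ℝ) * 2 ^ l - 2 ^ k| ≤ x * 2 ^ l + 2 ^ k := calc
    P * 4 * |(x : ℝ) * 2 ^ l - 2 ^ k| = P * 4 * |(x : ℝ) * (2 ^ l - y) + (x * y - 2 ^ k)| := by
      ring_nf
    _ ≤ P * 4 * (|(x : ℝ) * (2 ^ l - y)| + |(x : ℝ) * y - 2 ^ k|) := by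
      gcongr; exact abs_add_le _ _
    _ = x * (P * 4 * |(y : ℝ) - 2 ^ l|) + P * 4 * |(x : ℝ) * y - 2 ^ k| := by
      rw [abs_mul, Nat.abs_cast, abs_sub_comm]; ring
    _ ≤ x * 2 ^ l + 2 ^ k := by gcongr
  have hlk : l ≤ k := by
    by_contra! hkl
    have h2 : 2 * (2 : ℝ) ^ k ≤ x * 2 ^ l := by
      calc 2 * (2 : ℝ) ^ k = 2 ^ (k + 1) := by ring
        _ ≤ 1 * 2 ^ l := by rw [one_mul]; exact pow_le_pow_right₀ one_le_two hkl
        _ ≤ x * 2 ^ l := by gcongr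
    have := le_abs_self ((x : ℝ) * 2 ^ l - 2 ^ k)
    nlinarith [pow_pos (two_pos (α := ℝ)) k]
  obtain ⟨m, rfl⟩ := Nat.exists_eq_add_of_le hlk
  refine ⟨m, ?_⟩
  have hm : P * 4 * |(x : ℝ) - 2 ^ m| ≤ x + 2 ^ m := by
    rw [pow_add, mul_comm ((2 : ℝ) ^ l), ← sub_mul, ← add_mul, abs_mul,
      abs_of_pos (by positivity : (0 : ℝ) < 2 ^ l), ← mul_assoc] at hmain
    exact le_of_mul_le_mul_right hmain (by positivity)
  have := le_abs_self ((x : ℝ) - 2 ^ m)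
  nlinarith [abs_nonneg ((x : ℝ) - 2 ^ m)]

lemma two_pow_le {j n : ℕ} (hj : 1 ≤ j) (hn : ∀ k, n ≠ 2 ^ k) (h : NearPowTwo j n) :
    2 ^ j ≤ 2 * n := by
  obtain ⟨k, hk⟩ := h
  have h1 : (1 : ℝ) ≤ |(n : ℝ) - 2 ^ k| := by
    have : (n : ℤ) - 2 ^ k ≠ 0 := sub_ne_zero.2 (by exact_mod_cast hn k)
    exact_mod_cast Int.one_le_abs this
  have hP : (2 : ℝ) ≤ 2 ^ j := le_self_pow₀ one_le_two (by omega)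
  have h2 : (2 : ℝ) ^ j ≤ 2 ^ k := by nlinarith
  have h3 : (2 : ℝ) ^ k ≤ 2 * n := by
    have := neg_abs_le ((n : ℝ) - 2 ^ k)
    nlinarith
  exact_mod_cast h2.trans h3

end NearPowTwo

lemma Nat.log_mul_eq_add_or_add_one {b x y : ℕ} (hb : 1 < b) (hx : x ≠ 0) (hy : y ≠ 0) :
    Nat.log b (x * y) = Nat.log b x + Nat.log b y ∨
      Nat.log b (x * y) = Nat.log b x + Nat.log b y + 1 := by
  have hlow : Nat.log b x + Nat.log b y ≤ Nat.log b (x * y) :=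
    Nat.le_log_of_pow_le hb (by
      rw [pow_add]; exact Nat.mul_le_mul (Nat.pow_log_le_self b hx) (Nat.pow_log_le_self b hy))
  have hup : Nat.log b (x * y) < Nat.log b x + Nat.log b y + 2 :=
    Nat.log_lt_of_lt_pow (Nat.mul_ne_zero hx hy) (by
      rw [show Nat.log b x + Nat.log b y + 2 = (Nat.log b x + 1) + (Nat.log b y + 1) by ring,
        pow_add]
      exact Nat.mul_lt_mul'' (Nat.lt_pow_succ_log_self hb x) (Nat.lt_pow_succ_log_self hb y))
  omega

noncomputable def mantissa (n : ℕ) : ℝ := n / 2 ^ Nat.log 2 n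

lemma two_pow_log_mul_mantissa (n : ℕ) : 2 ^ Nat.log 2 n * mantissa n = n := by
  unfold mantissa; field_simp

lemma mantissa_mem_Icc {n : ℕ} (hn : n ≠ 0) : mantissa n ∈ Set.Icc (1 : ℝ) 2 := by
  have hP : (0 : ℝ) < 2 ^ Nat.log 2 n := by positivity
  have hlow : (2 : ℝ) ^ Nat.log 2 n ≤ n := by exact_mod_cast Nat.pow_log_le_self 2 hn
  have hup : (n : ℝ) ≤ 2 ^ Nat.log 2 n * 2 := by
    rw [← pow_succ]; exact_mod_cast (Nat.lt_pow_succ_log_self one_lt_two n).le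
  unfold mantissa
  constructor
  · rwa [one_le_div hP]
  · rwa [div_le_iff₀ hP, mul_comm]

lemma mantissa_mul {x y : ℕ} (hx : x ≠ 0) (hy : y ≠ 0) :
    mantissa x * mantissa y = mantissa (x * y) ∨
      mantissa x * mantissa y = 2 * mantissa (x * y) := by
  unfold mantissa
  rcases Nat.log_mul_eq_add_or_add_one one_lt_two hx hy with h | h <;> rw [h]
  · left; push_cast; field_simp; ring
  · right; push_cast; field_simp; ring

namespace Ultrafilter

lemma mem_of_tendsto_of_mul_self {M X Y : Type*} [Mul M] [TopologicalSpace X]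
    [TopologicalSpace Y] {u : Ultrafilter M} (hu : u * u = u) {f : M → X} {L : X}
    (hf : Tendsto f u (𝓝 L)) {g : X → X → Y} (hg : Continuous (Function.uncurry g))
    {R : Set (X × Y)} (hR : IsClosed R)
    (hfR : ∀ᶠ x in u, ∀ᶠ y in u, (f (x * y), g (f x) (f y)) ∈ R) : (L, g L L) ∈ R := by
  let l := (u : Filter M).curry (u : Filter M)
  have : l.NeBot := ⟨fun h => u.neBot.ne <| by
    simpa using mem_curry_iff.1 (h.symm ▸ mem_bot : (∅ : Set (M × M)) ∈ l)⟩
  have hprod : Tendsto (fun q : M × M => q.1 * q.2) l u := fun s hs => by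
    rw [← hu] at hs; exact (eventually_mul u u (· ∈ s)).1 hs
  have hpair : Tendsto (fun q : M × M => (f q.1, f q.2)) l (𝓝 (L, L)) :=
    ((hf.comp tendsto_fst).prodMk_nhds (hf.comp tendsto_snd)).mono_left curry_le_prod
  exact hR.mem_of_tendsto ((hf.comp hprod).prodMk_nhds ((hg.tendsto _).comp hpair))
    (eventually_curry_iff.2 hfR)

theorem exists_add_self_mul_self {M : Type*} [Semigroup M] [AddSemigroup M]
    {A : Set (Ultrafilter M)} (hne : A.Nonempty) (hcl : IsClosed A)
    (hadd : ∀ u ∈ A, ∀ v ∈ A, u + v ∈ A) (hmul : ∀ u ∈ A, ∀ v ∈ A, u * v ∈ A)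
    (hdist : ∀ u ∈ A, ∀ v ∈ A, ∀ w ∈ A, u * (v + w) = u * v + u * w) :
    ∃ z ∈ A, z + z = z ∧ z * z = z := by
  obtain ⟨p, hpA, hpp⟩ := exists_idempotent_in_compact_add_subsemigroup
    continuous_add_left A hne hcl.isCompact hadd
  obtain ⟨_, ⟨x, hx, rfl⟩, hzz⟩ := exists_idempotent_in_compact_subsemigroup
    continuous_mul_left ((· * p) '' A) (hne.image _)
    (hcl.isCompact.image (continuous_mul_left p)) (by
      rintro _ ⟨u, hu, rfl⟩ _ ⟨v, hv, rfl⟩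
      exact ⟨u * (p * v), hmul u hu _ (hmul p hpA v hv), by simp only [mul_assoc]⟩)
  refine ⟨x * p, hmul x hx p hpA, ?_, hzz⟩
  rw [← hdist x hx p hpA p hpA, hpp]

variable {z : Ultrafilter ℕ}

lemma eventually_ge_of_ne_pure (hz : ∀ n, z ≠ pure n) (N : ℕ) : ∀ᶠ n in z, N ≤ n := by
  have : (z : Filter ℕ) ≤ atTop := by
    rw [← Nat.cofinite_eq_atTop]
    exact z.le_cofinite_or_eq_pure.resolve_right fun ⟨n, hn⟩ => hz n hn
  exact this (eventually_ge_atTop N)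

lemma eventually_dvd_of_add_self_s12 (hadd : z + z = z) {m : ℕ} (hm : 0 < m) :
    ∀ᶠ n in z, m ∣ n := by
  have : NeZero m := ⟨hm.ne'⟩
  obtain ⟨c, hc⟩ := (z.map fun n : ℕ => (n : ZMod m)).eq_pure_of_finite
  have hcz : ∀ᶠ n : ℕ in z, (n : ZMod m) = c := by
    change {c} ∈ z.map _
    rw [hc]; exact mem_pure.2 rfl
  have hsum : ∀ᶠ x in z, ∀ᶠ y in z, ((x + y : ℕ) : ZMod m) = c :=
    (eventually_add z z fun n => (n : ZMod m) = c).1 (by rwa [hadd])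
  obtain ⟨x, hx, hxy⟩ := (hcz.and hsum).exists
  obtain ⟨y, hy, hxy⟩ := (hcz.and hxy).exists
  have hc0 : c = 0 := by
    rw [Nat.cast_add, hx, hy] at hxy
    exact left_eq_add.1 hxy.symm
  filter_upwards [hcz] with n hn
  rwa [← ZMod.natCast_eq_zero_iff, ← hc0]

lemma eventually_ne_two_pow (hz : ∀ n, z ≠ pure n) (hadd : z + z = z) :
    ∀ᶠ n in z, ∀ k, n ≠ 2 ^ k := by
  by_contra h
  have hpow : ∀ᶠ n in z, ∃ k, n = 2 ^ k := by
    simpa only [not_forall, not_not] using eventually_not.2 h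
  have hsum : ∀ᶠ x in z, ∀ᶠ y in z, ∃ k, x + y = 2 ^ k :=
    (eventually_add z z fun n => ∃ k, n = 2 ^ k).1 (by rwa [hadd])
  obtain ⟨x, ⟨a, rfl⟩, hx⟩ := (hpow.and hsum).exists
  obtain ⟨y, ⟨b, rfl⟩, ⟨c, hc⟩, hlt⟩ :=
    (hpow.and (hx.and (eventually_ge_of_ne_pure hz (2 ^ a + 1)))).exists
  have hbc : b < c := (Nat.pow_lt_pow_iff_right one_lt_two).1 (by
    have := Nat.one_le_two_pow (n := a); omega)
  have := Nat.pow_le_pow_right two_pos hbc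
  rw [pow_succ] at this
  omega

lemma eventually_nearPowTwo (hz : ∀ n, z ≠ pure n) (hmul : z * z = z) (j : ℕ) :
    ∀ᶠ n in z, NearPowTwo j n := by
  have hpos : ∀ᶠ n in z, n ≠ 0 := (eventually_ge_of_ne_pure hz 1).mono fun n hn => by omega
  obtain ⟨L, hL, hlim⟩ : ∃ L ∈ Set.Icc (1 : ℝ) 2, Tendsto mantissa z (𝓝 L) :=
    isCompact_Icc.ultrafilter_le_nhds (z.map mantissa)
      (le_principal_iff.2 (hpos.mono fun n hn => mantissa_mem_Icc hn))
  have hLL : L * L = L ∨ L * L = 2 * L :=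
    mem_of_tendsto_of_mul_self hmul hlim continuous_mul
      ((isClosed_eq continuous_snd continuous_fst).union
        (isClosed_eq continuous_snd (continuous_const.mul continuous_fst)))
      (hpos.mono fun x hx => hpos.mono fun y hy => mantissa_mul hx hy)
  have hL0 : L ≠ 0 := by linarith [hL.1]
  obtain ⟨e, rfl⟩ : ∃ e : ℕ, L = 2 ^ e := by
    rcases hLL with h | h
    · exact ⟨0, by simpa using mul_left_cancel₀ hL0 (h.trans (mul_one L).symm)⟩
    · exact ⟨1, by simpa using mul_left_cancel₀ hL0 (h.trans (mul_comm 2 L))⟩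
  filter_upwards [Metric.tendsto_nhds.1 hlim (1 / 2 ^ j) (by positivity)] with n hn
  rw [Real.dist_eq, lt_div_iff₀ (by positivity)] at hn
  refine ⟨Nat.log 2 n + e, ?_⟩
  rw [← two_pow_log_mul_mantissa n, pow_add, ← mul_sub, abs_mul, abs_of_pos (by positivity)]
  calc 2 ^ j * (2 ^ Nat.log 2 n * |mantissa n - 2 ^ e|)
      = 2 ^ Nat.log 2 n * (|mantissa n - 2 ^ e| * 2 ^ j) := by ring
    _ ≤ 2 ^ Nat.log 2 n * 2 ^ e := by gcongr; exact hn.le.trans (one_le_pow₀ one_le_two)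

lemma eventually_exists_nearPowTwo_not_dvd (hz : ∀ n, z ≠ pure n) (hadd : z + z = z)
    (hnear : ∀ j, ∀ᶠ n in z, NearPowTwo j n) :
    ∀ᶠ n in z, ∃ j, NearPowTwo j n ∧ ¬ 2 ^ j ∣ n := by
  rw [← hadd]
  refine (eventually_add z z _).2 ?_
  filter_upwards [eventually_ge_of_ne_pure hz 1] with x hx
  filter_upwards [hnear (x + 1), eventually_dvd_of_add_self_s12 hadd (pow_pos two_pos x),
    eventually_ge_of_ne_pure hz (x * 2 ^ (x + 2))] with y hy hdvd hxy
  refine ⟨x, hy.add_left hxy, fun h => ?_⟩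
  exact Nat.lt_two_pow_self.not_ge (Nat.le_of_dvd hx ((Nat.dvd_add_left hdvd).1 h))

theorem mul_self_ne_of_add_self (hz : ∀ n, z ≠ pure n) (hadd : z + z = z) : z * z ≠ z := by
  intro hmul
  have hT := eventually_exists_nearPowTwo_not_dvd hz hadd (eventually_nearPowTwo hz hmul)
  obtain ⟨x, hx0, hxpow, hx⟩ := ((eventually_ge_of_ne_pure hz 1).and
    ((eventually_ne_two_pow hz hadd).and ((eventually_mul z z _).1 (by rwa [hmul])))).exists
  obtain ⟨y, ⟨j, hj, hndvd⟩, hy, hdvd⟩ := (hx.and ((eventually_nearPowTwo hz hmul (x + 3)).and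
    (eventually_dvd_of_add_self_s12 hadd (pow_pos two_pos (x + 3))))).exists
  have hjx : x + 3 < j := by
    by_contra! h
    exact hndvd ((pow_dvd_pow 2 h).trans (hdvd.mul_left x))
  have hbound := (NearPowTwo.of_mul hx0 hy (hj.mono hjx.le)).two_pow_le (by omega) hxpow
  have := Nat.lt_two_pow_self (n := x)
  rw [pow_succ] at hbound
  omega

end Ultrafilter

/-- No closed subalgebra of `(ℕ*, +, ·)` satisfies the left distributivity law. -/
theorem stmt_12 :
    ¬ ∃ A : Set (Ultrafilter ℕ), A.Nonempty ∧
      (∀ u ∈ A, ∀ n : ℕ, u ≠ pure n) ∧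
      IsClosed A ∧
      (∀ u ∈ A, ∀ v ∈ A, u + v ∈ A) ∧
      (∀ u ∈ A, ∀ v ∈ A, u * v ∈ A) ∧
      (∀ u ∈ A, ∀ v ∈ A, ∀ w ∈ A, u * (v + w) = u * v + u * w) := by
  rintro ⟨A, hne, hnp, hcl, hadd, hmul, hdist⟩
  obtain ⟨z, hzA, hzz, hzz'⟩ := Ultrafilter.exists_add_self_mul_self hne hcl hadd hmul hdist
  exact Ultrafilter.mul_self_ne_of_add_self (hnp z hzA) hzz hzz'
end

section
/- Every nonempty compact Hausdorff left topological groupoid satisfying the identities (x·y)·(y·z) = ((x·y)·y)·z and (x·y)·(x·z) = x·(y·(x·z)) has an idempotent, i.e., an element a with a·a = a. -/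
/-!
Take a minimal nonempty closed subgroupoid `A` (Zorn, using compactness) and `a ∈ A`. The second
identity makes `a·A` a closed subgroupoid inside `A`, so `a·A = A` and `a·b = a` for some `b ∈ A`.
For such `b` the first identity gives `a·(b·z) = a·z`, hence `{x ∈ A | a·x = a}` is again a closed
subgroupoid; by minimality it is all of `A`, and in particular `a·a = a`.
-/

section ClosedSubgroupoid

variable {X : Type*} [TopologicalSpace X]

structure IsClosedSubgroupoid (m : X → X → X) (A : Set X) : Prop where
  nonempty : A.Nonempty
  isClosed : IsClosed A
  mul_mem : ∀ x ∈ A, ∀ y ∈ A, m x y ∈ A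

namespace IsClosedSubgroupoid

variable {m : X → X → X} {A : Set X} {a : X}

theorem sInter_of_isChain [CompactSpace X] {c : Set (Set X)}
    (hc : ∀ U ∈ c, IsClosedSubgroupoid m U) (hchain : IsChain (· ⊆ ·) c) (hne : c.Nonempty) :
    IsClosedSubgroupoid m (⋂₀ c) where
  nonempty :=
    have : Nonempty c := hne.to_subtype
    IsCompact.nonempty_sInter_of_directed_nonempty_isCompact_isClosed
      (IsChain.directedOn hchain.symm) (fun U hU => (hc U hU).nonempty)
      (fun U hU => (hc U hU).isClosed.isCompact) (fun U hU => (hc U hU).isClosed)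
  isClosed := isClosed_sInter fun U hU => (hc U hU).isClosed
  mul_mem x hx y hy := Set.mem_sInter.mpr fun U hU =>
    (hc U hU).mul_mem x (Set.mem_sInter.mp hx U hU) y (Set.mem_sInter.mp hy U hU)

theorem exists_minimal [CompactSpace X] [Nonempty X] (m : X → X → X) :
    ∃ A, Minimal (IsClosedSubgroupoid m) A := by
  have huniv : IsClosedSubgroupoid m Set.univ :=
    ⟨Set.univ_nonempty, isClosed_univ, fun _ _ _ _ => Set.mem_univ _⟩
  obtain ⟨A, -, hA⟩ := zorn_superset_nonempty {A | IsClosedSubgroupoid m A}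
    (fun c hc hchain hne => ⟨⋂₀ c, sInter_of_isChain hc hchain hne,
      fun _ => Set.sInter_subset_of_mem⟩) _ huniv
  exact ⟨A, hA⟩

theorem image_mul_left [CompactSpace X] [T2Space X] (hA : IsClosedSubgroupoid m A) (ha : a ∈ A)
    (hmc : Continuous (m a))
    (h2 : ∀ x y z : X, m (m x y) (m x z) = m x (m y (m x z))) :
    IsClosedSubgroupoid m (m a '' A) where
  nonempty := hA.nonempty.image _
  isClosed := (hA.isClosed.isCompact.image hmc).isClosed
  mul_mem := by
    rintro _ ⟨y, hy, rfl⟩ _ ⟨z, hz, rfl⟩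
    exact ⟨m y (m a z), hA.mul_mem y hy _ (hA.mul_mem a ha z hz), (h2 a y z).symm⟩

theorem sep_mul_left_eq [T1Space X] (hA : IsClosedSubgroupoid m A) (hmc : Continuous (m a))
    (h1 : ∀ x y z : X, m (m x y) (m y z) = m (m (m x y) y) z)
    (hb : ∃ b ∈ A, m a b = a) :
    IsClosedSubgroupoid m {x ∈ A | m a x = a} where
  nonempty := hb
  isClosed := hA.isClosed.inter (isClosed_singleton.preimage hmc)
  mul_mem := by
    rintro x ⟨hx, hax⟩ y ⟨hy, hay⟩
    refine ⟨hA.mul_mem x hx y hy, ?_⟩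
    have := h1 a x y
    rw [hax, hax] at this
    rw [this, hay]

end IsClosedSubgroupoid

end ClosedSubgroupoid

/-- Every nonempty compact Hausdorff left topological groupoid satisfying
`(x·y)·(y·z) = ((x·y)·y)·z` and `(x·y)·(x·z) = x·(y·(x·z))` has an idempotent. -/
theorem stmt_15 {X : Type*} [TopologicalSpace X] [CompactSpace X] [T2Space X] [Nonempty X]
    (m : X → X → X)
    (hmc : ∀ a : X, Continuous fun x => m a x)
    (h1 : ∀ x y z : X, m (m x y) (m y z) = m (m (m x y) y) z)
    (h2 : ∀ x y z : X, m (m x y) (m x z) = m x (m y (m x z))) :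
    ∃ a : X, m a a = a := by
  obtain ⟨A, hA⟩ := IsClosedSubgroupoid.exists_minimal m
  obtain ⟨a, ha⟩ := hA.prop.nonempty
  have himage : m a '' A = A := hA.eq_of_subset (hA.prop.image_mul_left ha (hmc a) h2)
    (Set.image_subset_iff.mpr fun y hy => hA.prop.mul_mem a ha y hy)
  obtain ⟨b, hb, hab⟩ : a ∈ m a '' A := by rwa [himage]
  have hsep : {x ∈ A | m a x = a} = A :=
    hA.eq_of_subset (hA.prop.sep_mul_left_eq (hmc a) h1 ⟨b, hb, hab⟩) (Set.sep_subset _ _)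
  have haa : a ∈ {x ∈ A | m a x = a} := by rwa [hsep]
  exact ⟨a, haa.2⟩
end

section
/- Every nonempty compact Hausdorff left topological groupoid satisfying the identities (x·z)·(y·z) = ((x·z)·y)·z and (x·y)·(x·z) = x·(y·(x·z)) has an idempotent, i.e., an element a with a·a = a. -/
/-!
This is the Ellis–Numakura argument, with the identity `(x·y)·(x·z) = x·(y·(x·z))` doing the
work of associativity. By Zorn's lemma and compactness there is a minimal nonempty closed
subgroupoid `N`. For `a ∈ N` the identity shows that `a·N` is again one, hence `a·N = N`; it
then shows that `{x ∈ N | a·x = a}` is one too, nonempty because `a ∈ a·N`. So this set is all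
of `N`, and in particular `a·a = a`.
-/

section

variable {X : Type*} [TopologicalSpace X]

def IsClosedSubgroupoid_s16 (m : X → X → X) (N : Set X) : Prop :=
  IsClosed N ∧ N.Nonempty ∧ ∀ x ∈ N, ∀ y ∈ N, m x y ∈ N

theorem exists_minimal_isClosedSubgroupoid [CompactSpace X] [Nonempty X] (m : X → X → X) :
    ∃ N, Minimal (IsClosedSubgroupoid_s16 m) N := by
  refine zorn_superset _ fun c hcN hc => ⟨⋂₀ c, ⟨isClosed_sInter fun t ht => (hcN ht).1, ?_,
    fun x hx y hy => Set.mem_sInter.2 fun t ht => (hcN ht).2.2 x (hx t ht) y (hy t ht)⟩,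
    fun _ => Set.sInter_subset_of_mem⟩
  obtain rfl | hc_ne := c.eq_empty_or_nonempty
  · simp
  have := hc_ne.coe_sort
  rw [Set.sInter_eq_iInter]
  exact IsCompact.nonempty_iInter_of_directed_nonempty_isCompact_isClosed _
    (DirectedOn.directed_val (IsChain.directedOn hc.symm)) (fun t => (hcN t.2).2.1)
    (fun t => (hcN t.2).1.isCompact) (fun t => (hcN t.2).1)

section Minimal

variable [CompactSpace X] [T2Space X] {m : X → X → X} {N : Set X} {a : X}

theorem Minimal.image_left_eq (hN : Minimal (IsClosedSubgroupoid_s16 m) N)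
    (hma : Continuous (m a)) (hdistrib : ∀ y z : X, m (m a y) (m a z) = m a (m y (m a z)))
    (ha : a ∈ N) : m a '' N = N := by
  obtain ⟨N_closed, -, N_mul⟩ := hN.prop
  refine hN.eq_of_subset ⟨(N_closed.isCompact.image hma).isClosed, ⟨_, a, ha, rfl⟩, ?_⟩ ?_
  · rintro _ ⟨x, hx, rfl⟩ _ ⟨y, hy, rfl⟩
    exact ⟨m x (m a y), N_mul _ hx _ (N_mul _ ha _ hy), (hdistrib x y).symm⟩
  · rintro _ ⟨x, hx, rfl⟩
    exact N_mul _ ha _ hx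

theorem Minimal.mul_self_eq (hN : Minimal (IsClosedSubgroupoid_s16 m) N)
    (hma : Continuous (m a)) (hdistrib : ∀ y z : X, m (m a y) (m a z) = m a (m y (m a z)))
    (ha : a ∈ N) : m a a = a := by
  have image_eq := hN.image_left_eq hma hdistrib ha
  obtain ⟨N_closed, -, N_mul⟩ := hN.prop
  suffices N ∩ {x | m a x = a} = N from Set.inter_eq_left.1 this ha
  refine hN.eq_of_subset ⟨N_closed.inter (isClosed_singleton.preimage hma), ?_, ?_⟩
    Set.inter_subset_left
  · obtain ⟨b, hb, hba⟩ := image_eq.symm ▸ ha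
    exact ⟨b, hb, hba⟩
  · rintro x ⟨hx, hax : m a x = a⟩ y ⟨hy, hay : m a y = a⟩
    obtain ⟨z, -, rfl⟩ := image_eq.symm ▸ hy
    exact ⟨N_mul _ hx _ hy, show m a (m x (m a z)) = a by rw [← hdistrib, hax, hay]⟩

end Minimal

end

theorem stmt_16_general {X : Type*} [TopologicalSpace X] [CompactSpace X] [T2Space X] [Nonempty X]
    (m : X → X → X)
    (hmc : ∀ a : X, Continuous fun x => m a x)
    (h2 : ∀ x y z : X, m (m x y) (m x z) = m x (m y (m x z))) :
    ∃ a : X, m a a = a := by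
  obtain ⟨N, hN⟩ := exists_minimal_isClosedSubgroupoid m
  obtain ⟨a, ha⟩ := hN.prop.2.1
  exact ⟨a, hN.mul_self_eq (hmc a) (h2 a) ha⟩

/-- Every nonempty compact Hausdorff left topological groupoid satisfying
`(x·z)·(y·z) = ((x·z)·y)·z` and `(x·y)·(x·z) = x·(y·(x·z))` has an idempotent. -/
theorem stmt_16 {X : Type*} [TopologicalSpace X] [CompactSpace X] [T2Space X] [Nonempty X]
    (m : X → X → X)
    (hmc : ∀ a : X, Continuous fun x => m a x)
    (h1 : ∀ x y z : X, m (m x z) (m y z) = m (m (m x z) y) z)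
    (h2 : ∀ x y z : X, m (m x y) (m x z) = m x (m y (m x z))) :
    ∃ a : X, m a a = a :=
  stmt_16_general m hmc h2
end

section
/- Every nonempty compact Hausdorff left topological groupoid satisfying the identity x·(y·z) = (x·z)·y has an idempotent, i.e., an element a with a·a = a. -/
/-!
Ellis' argument: by Zorn's lemma and Cantor's intersection theorem there is a minimal nonempty
closed subgroupoid `N`. For `a ∈ N` the identity gives `(a·s)·(a·t) = a·(a·(s·t))`, so `a·N` is
again a closed subgroupoid, hence `a·N = N`. Then `{x ∈ N | a·x = a}` is nonempty (as `a ∈ a·N`),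
closed, and closed under `·` (as `a·(x·y) = (a·y)·x`), so it is all of `N`; in particular `a·a = a`.
-/

open Set

structure IsNonemptyClosedSubmagma {X : Type*} [TopologicalSpace X] (m : X → X → X)
    (N : Set X) : Prop where
  isClosed : IsClosed N
  nonempty : N.Nonempty
  mul_mem : ∀ x ∈ N, ∀ y ∈ N, m x y ∈ N

section

variable {X : Type*} [TopologicalSpace X]

theorem exists_minimal_isNonemptyClosedSubmagma [CompactSpace X] [Nonempty X]
    (m : X → X → X) : ∃ N, Minimal (IsNonemptyClosedSubmagma m) N := by
  have huniv : IsNonemptyClosedSubmagma m univ :=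
    ⟨isClosed_univ, univ_nonempty, fun _ _ _ _ => mem_univ _⟩
  refine (zorn_superset_nonempty {N | IsNonemptyClosedSubmagma m N}
    (fun c hc hchain hne => ?_) univ huniv).imp fun _ => And.right
  have : Nonempty c := hne.to_subtype
  refine ⟨⋂₀ c, ⟨isClosed_sInter fun N hN => (hc hN).isClosed, ?_, ?_⟩,
    fun N hN => sInter_subset_of_mem hN⟩
  · exact IsCompact.nonempty_sInter_of_directed_nonempty_isCompact_isClosed
      (IsChain.directedOn hchain.symm) (fun N hN => (hc hN).nonempty)
      (fun N hN => (hc hN).isClosed.isCompact) (fun N hN => (hc hN).isClosed)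
  · intro x hx y hy
    exact mem_sInter.2 fun N hN => (hc hN).mul_mem x (hx N hN) y (hy N hN)

namespace IsNonemptyClosedSubmagma

variable {m : X → X → X} (h : ∀ x y z : X, m x (m y z) = m (m x z) y) {N : Set X}
  (hN : Minimal (IsNonemptyClosedSubmagma m) N) {a : X}
include h hN

theorem image_mul_left_eq [CompactSpace X] [T2Space X] (ha : a ∈ N)
    (hma : Continuous (m a)) : m a '' N = N := by
  have hsub : m a '' N ⊆ N := by
    rintro _ ⟨s, hs, rfl⟩
    exact hN.prop.mul_mem a ha s hs
  refine hN.eq_of_subset ⟨(hN.prop.isClosed.isCompact.image hma).isClosed, ⟨_, a, ha, rfl⟩, ?_⟩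
    hsub
  rintro _ ⟨s, hs, rfl⟩ _ ⟨t, ht, rfl⟩
  refine ⟨m a (m s t), hN.prop.mul_mem _ ha _ (hN.prop.mul_mem s hs t ht), ?_⟩
  rw [← h a (m a t) s, ← h a s t]

theorem mul_eq_left [CompactSpace X] [T2Space X] (ha : a ∈ N) (hma : Continuous (m a)) :
    ∀ x ∈ N, m a x = a := by
  have hA : IsNonemptyClosedSubmagma m (N ∩ {x | m a x = a}) := by
    refine ⟨hN.prop.isClosed.inter (isClosed_singleton.preimage hma), ?_, ?_⟩
    · obtain ⟨s, hs, hsa⟩ := (image_mul_left_eq h hN ha hma).symm ▸ ha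
      exact ⟨s, hs, hsa⟩
    · rintro x ⟨hx, hax : m a x = a⟩ y ⟨hy, hay : m a y = a⟩
      refine ⟨hN.prop.mul_mem x hx y hy, ?_⟩
      change m a (m x y) = a
      rw [h, hay, hax]
  intro x hx
  exact (hN.eq_of_subset hA inter_subset_left ▸ hx).2

end IsNonemptyClosedSubmagma

end

/-- Every nonempty compact Hausdorff left topological groupoid satisfying
`x·(y·z) = (x·z)·y` has an idempotent. -/
theorem stmt_18 {X : Type*} [TopologicalSpace X] [CompactSpace X] [T2Space X] [Nonempty X]
    (m : X → X → X)
    (hmc : ∀ a : X, Continuous fun x => m a x)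
    (h : ∀ x y z : X, m x (m y z) = m (m x z) y) :
    ∃ a : X, m a a = a := by
  obtain ⟨N, hN⟩ := exists_minimal_isNonemptyClosedSubmagma m
  obtain ⟨a, ha⟩ := hN.prop.nonempty
  exact ⟨a, IsNonemptyClosedSubmagma.mul_eq_left h hN ha (hmc a) a ha⟩
end

section
/- Every nonempty compact Hausdorff left topological groupoid satisfying the left self-distributivity law x·(y·z) = (x·y)·(x·z) together with the identity x·(x·x) = (x·x)·x has an idempotent, i.e., an element a with a·a = a. -/
/-- Writing `b = a·a`, distributivity gives `a·b = b·b` and the second law turns this into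
`b·a = b·b`; distributing `b` over `a·a` then shows that `b·b` is idempotent. -/
theorem idempotent_mul_self_mul_self {X : Type*} (m : X → X → X)
    (h1 : ∀ x y z : X, m x (m y z) = m (m x y) (m x z))
    (h2 : ∀ x : X, m x (m x x) = m (m x x) x) (a : X) :
    m (m (m a a) (m a a)) (m (m a a) (m a a)) = m (m a a) (m a a) := by
  set b := m a a
  set c := m b b
  have hab : m a b = c := h1 a a a
  have hba : m b a = c := by rw [← hab, ← h2]
  calc m c c = m (m b a) (m b a) := by rw [hba]
    _ = c := (h1 b a a).symm

theorem stmt_19_general {X : Type*} [Nonempty X]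
    (m : X → X → X)
    (h1 : ∀ x y z : X, m x (m y z) = m (m x y) (m x z))
    (h2 : ∀ x : X, m x (m x x) = m (m x x) x) :
    ∃ a : X, m a a = a :=
  ⟨_, idempotent_mul_self_mul_self m h1 h2 (Classical.arbitrary X)⟩

/-- Every nonempty compact Hausdorff left topological groupoid satisfying left
self-distributivity `x·(y·z) = (x·y)·(x·z)` and `x·(x·x) = (x·x)·x` has an idempotent. -/
theorem stmt_19 {X : Type*} [TopologicalSpace X] [CompactSpace X] [T2Space X] [Nonempty X]
    (m : X → X → X)
    (hmc : ∀ a : X, Continuous fun x => m a x)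
    (h1 : ∀ x y z : X, m x (m y z) = m (m x y) (m x z))
    (h2 : ∀ x : X, m x (m x x) = m (m x x) x) :
    ∃ a : X, m a a = a :=
  stmt_19_general m h1 h2
end
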